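/- arXiv:2404.00004 — 6 statements merged into one kernel-verified Lean document; each statement's English description precedes it below -/
import Mathlib

section
/- If a finite group G is a QσT-group, then every quotient G/N of G by a normal subgroup N is also a QσT-group. -/
open Subgroup
open scoped Pointwise

/-- A partition of the set of all primes into pairwise disjoint nonempty blocks. -/
structure SigmaPartition : Type where
  blocks : Set (Set ℕ)
  nonempty : ∀ s ∈ blocks, s.Nonempty
  mem_prime : ∀ s ∈ blocks, ∀ p ∈ s, p.Prime
  pairwise_disjoint : ∀ s ∈ blocks, ∀ t ∈ blocks, s ≠ t → Disjoint s t
  covers : ∀ p : ℕ, p.Prime → ∃ s ∈ blocks, p ∈ s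

/-- `n` is a σ-primary number: all of its prime divisors lie in a single block of σ. -/
def IsSigmaPrimaryCard (σ : SigmaPartition) (n : ℕ) : Prop :=
  ∃ s ∈ σ.blocks, ∀ p : ℕ, p.Prime → p ∣ n → p ∈ s

/-- A group is σ-primary if all primes dividing its order lie in one block of σ. -/
def IsSigmaPrimary (σ : SigmaPartition) (X : Type*) [Group X] : Prop :=
  IsSigmaPrimaryCard σ (Nat.card X)

section

variable {G : Type*} [Group G]

/-- A subgroup is modular if it is a modular element (in the sense of Kurosh)
of the lattice of all subgroups. -/
def IsModularSubgroup (M : Subgroup G) : Prop :=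
  (∀ X Z : Subgroup G, X ≤ Z → X ⊔ (M ⊓ Z) = (X ⊔ M) ⊓ Z) ∧
  (∀ Y Z : Subgroup G, M ≤ Z → M ⊔ (Y ⊓ Z) = (M ⊔ Y) ⊓ Z)

/-- One step of a σ-subnormal chain: `A ≤ B` and either `A` is normal in `B` or
`B` modulo the normal core of `A` in `B` is σ-primary. -/
def SigmaStep (σ : SigmaPartition) (A B : Subgroup G) : Prop :=
  A ≤ B ∧ ((A.subgroupOf B).Normal ∨
    IsSigmaPrimaryCard σ (Nat.card (↥B ⧸ (A.subgroupOf B).normalCore)))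

/-- `A` is σ-subnormal in the ambient group. -/
def IsSigmaSubnormal (σ : SigmaPartition) (A : Subgroup G) : Prop :=
  ∃ (n : ℕ) (c : Fin (n + 1) → Subgroup G), c 0 = A ∧ c (Fin.last n) = ⊤ ∧
    ∀ i : Fin n, SigmaStep σ (c i.castSucc) (c i.succ)

/-- `A` is σ-quasinormal: σ-subnormal and modular. -/
def IsSigmaQuasinormal (σ : SigmaPartition) (A : Subgroup G) : Prop :=
  IsSigmaSubnormal σ A ∧ IsModularSubgroup A

/-- `A` is σ-quasinormal in the intermediate subgroup `B`. -/
def IsSigmaQuasinormalIn (σ : SigmaPartition) (A B : Subgroup G) : Prop :=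
  A ≤ B ∧ IsSigmaQuasinormal σ (A.subgroupOf B)

/-- `A` is σ-subquasinormal: there is a chain from `A` to the whole group with
each term σ-quasinormal in the next. -/
def IsSigmaSubquasinormal (σ : SigmaPartition) (A : Subgroup G) : Prop :=
  ∃ (n : ℕ) (c : Fin (n + 1) → Subgroup G), c 0 = A ∧ c (Fin.last n) = ⊤ ∧
    ∀ i : Fin n, IsSigmaQuasinormalIn σ (c i.castSucc) (c i.succ)

/-- `H` is subnormal in the ambient group. -/
def IsSubnormalSubgroup (H : Subgroup G) : Prop :=
  ∃ (n : ℕ) (c : Fin (n + 1) → Subgroup G), c 0 = H ∧ c (Fin.last n) = ⊤ ∧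
    ∀ i : Fin n, c i.castSucc ≤ c i.succ ∧ ((c i.castSucc).subgroupOf (c i.succ)).Normal

/-- The factor `H/K` (for `K ≤ H`) is cyclic, elementwise formulation. -/
def IsCyclicFactor (H K : Subgroup G) : Prop :=
  ∃ g ∈ H, ∀ h ∈ H, ∃ n : ℤ, (g ^ n)⁻¹ * h ∈ K

end

/-- `G` is a QσT-group: σ-quasinormality is transitive in `G`. -/
def IsQSigmaT (σ : SigmaPartition) (G : Type*) [Group G] : Prop :=
  ∀ H K : Subgroup G, H ≤ K →
    IsSigmaQuasinormal σ (H.subgroupOf K) → IsSigmaQuasinormal σ K →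
    IsSigmaQuasinormal σ H

/-- `(D, Z; U 1, …, U k)` is a Robinson complex of `G`. -/
def IsRobinsonComplex (G : Type*) [Group G] (D Z : Subgroup G)
    (k : ℕ) (U : Fin k → Subgroup G) : Prop :=
  D ≠ ⊥ ∧ D.Normal ∧ ⁅D, D⁆ = D ∧
  Z = (Subgroup.center ↥D).map D.subtype ∧
  Z = (frattini ↥D).map D.subtype ∧
  (∀ i, Z ≤ U i ∧ U i ≤ D ∧ (U i).Normal) ∧
  (⨆ i, U i) = D ∧
  (∀ i, U i ⊓ (Z ⊔ ⨆ j ∈ ({j | j ≠ i} : Set (Fin k)), U j) = Z) ∧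
  (∀ i, ¬ ⁅U i, U i⁆ ≤ Z) ∧
  (∀ i, ∀ N : Subgroup G, Z ≤ N → N ≤ U i → (N.subgroupOf (U i)).Normal →
    N = Z ∨ N = U i) ∧
  (∀ H K : Subgroup G, H.Normal → K.Normal → K < H → H ≤ Z →
    (∀ N : Subgroup G, N.Normal → K ≤ N → N ≤ H → N = K ∨ N = H) →
    IsCyclicFactor H K)

/-- The largest normal p-subgroup `O_p(X)`. -/
def pCoreSubgroup (p : ℕ) (X : Type*) [Group X] : Subgroup X :=
  sSup {P : Subgroup X | P.Normal ∧ IsPGroup p ↥P}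

/-- `G` satisfies `N_p`: whenever `N` is a soluble normal subgroup of `G`,
p'-elements of `G/N` induce power automorphisms on `O_p(G/N)`. -/
def SatisfiesNp (p : ℕ) (G : Type*) [Group G] : Prop :=
  ∀ (N : Subgroup G) [N.Normal], IsSolvable ↥N →
    ∀ x : G ⧸ N, ¬ p ∣ orderOf x →
      ∀ S : Subgroup (G ⧸ N), S ≤ pCoreSubgroup p (G ⧸ N) →
        ∀ s ∈ S, x * s * x⁻¹ ∈ S

/-- `G` satisfies `P_p`: whenever `N` is a soluble normal subgroup of `G`,
every subgroup of `O_p(G/N)` is quasinormal in every Sylow p-subgroup of `G/N`. -/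
def SatisfiesPp (p : ℕ) (G : Type*) [Group G] : Prop :=
  ∀ (N : Subgroup G) [N.Normal], IsSolvable ↥N →
    ∀ S : Subgroup (G ⧸ N), S ≤ pCoreSubgroup p (G ⧸ N) →
      ∀ P : Sylow p (G ⧸ N), ∀ T : Subgroup (G ⧸ N), T ≤ ↑P →
        (S : Set (G ⧸ N)) * (T : Set (G ⧸ N)) = (T : Set (G ⧸ N)) * (S : Set (G ⧸ N))

/-- `X` is a non-abelian P-group of type `(p, q)`: `X = A ⋊ ⟨t⟩` with `A` a non-trivial
elementary abelian p-group and `t` of prime order `q ≠ p` inducing a non-trivial power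
automorphism on `A`. -/
def IsPGroupOfType (p q : ℕ) (X : Type*) [Group X] : Prop :=
  p.Prime ∧ q.Prime ∧ p ≠ q ∧
  ∃ (A : Subgroup X) (t : X),
    A ≠ ⊥ ∧ (∀ a ∈ A, a ^ p = 1) ∧ (∀ a ∈ A, ∀ b ∈ A, a * b = b * a) ∧
    orderOf t = q ∧ A.Normal ∧ A ⊔ Subgroup.zpowers t = ⊤ ∧
    A ⊓ Subgroup.zpowers t = ⊥ ∧
    (∀ S : Subgroup X, S ≤ A → ∀ s ∈ S, t * s * t⁻¹ ∈ S) ∧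
    ∃ a ∈ A, t * a * t⁻¹ ≠ a

/-- `G` satisfies `Q_{σ(p,q)}`. -/
def SatisfiesQSigmaPQ (σ : SigmaPartition) (p q : ℕ) (G : Type*) [Group G] : Prop :=
  ∀ (N : Subgroup G) [N.Normal], IsSolvable ↥N →
    ∀ P : Subgroup (G ⧸ N), P.Normal → IsSigmaPrimary σ ↥P → IsPGroupOfType p q ↥P →
      ∀ S : Subgroup (G ⧸ N), S ≤ P → IsModularSubgroup S

/-- `G` satisfies `M_{p,q}`. -/
def SatisfiesMpq (p q : ℕ) (G : Type*) [Group G] : Prop :=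
  ∀ (N : Subgroup G) [N.Normal], IsSolvable ↥N →
    ∀ P : Subgroup (G ⧸ N), P.Normal → IsPGroupOfType p q ↥P →
      ∀ S : Subgroup (G ⧸ N), S ≤ P → IsModularSubgroup S

/-! ### Auxiliary lemmas for Lemma 2.4 -/

section AuxLemmas

open Function

variable {X Y : Type*} [Group X] [Group Y]

lemma aux_isSigmaPrimaryCard_of_dvd {σ : SigmaPartition} {m n : ℕ} (hmn : m ∣ n)
    (h : IsSigmaPrimaryCard σ n) : IsSigmaPrimaryCard σ m := by
  obtain ⟨s, hs, hp⟩ := h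
  exact ⟨s, hs, fun p hp' hd => hp p hp' (hd.trans hmn)⟩

lemma aux_subgroupComap_surjective (f : X →* Y) (hf : Surjective f) (B : Subgroup Y) :
    Surjective (f.subgroupComap B) := by
  rintro ⟨y, hy⟩
  obtain ⟨x, rfl⟩ := hf y
  exact ⟨⟨x, hy⟩, rfl⟩

/-- A surjection between quotients. -/
lemma aux_quotientMap_surjective {M : Subgroup Y} [M.Normal] {L : Subgroup X} [L.Normal]
    (f : X →* Y) (hf : Surjective f) (h : L ≤ M.comap f) :
    Surjective (QuotientGroup.map L M f h) := by
  intro q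
  obtain ⟨y, rfl⟩ := QuotientGroup.mk'_surjective M q
  obtain ⟨x, rfl⟩ := hf y
  exact ⟨QuotientGroup.mk x, rfl⟩

lemma aux_card_quotient_dvd_of_le_comap (f : X →* Y) (hf : Surjective f)
    {M : Subgroup Y} [M.Normal] {L : Subgroup X} [L.Normal] (h : L ≤ M.comap f) :
    Nat.card (Y ⧸ M) ∣ Nat.card (X ⧸ L) :=
  Subgroup.card_dvd_of_surjective (QuotientGroup.map L M f h)
    (aux_quotientMap_surjective f hf h)

lemma aux_card_quotient_dvd_of_comap_le (f : X →* Y) (hf : Surjective f)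
    {M : Subgroup Y} [M.Normal] {L : Subgroup X} [L.Normal] (h : M.comap f ≤ L) :
    Nat.card (X ⧸ L) ∣ Nat.card (Y ⧸ M) := by
  have h1 : Nat.card (X ⧸ L) ∣ Nat.card (X ⧸ M.comap f) :=
    aux_card_quotient_dvd_of_le_comap (MonoidHom.id X) surjective_id (by simpa using h)
  have hker : ((QuotientGroup.mk' M).comp f).ker = M.comap f := by
    rw [← MonoidHom.comap_ker, QuotientGroup.ker_mk']
  have h2 : Nat.card (X ⧸ M.comap f) = Nat.card (Y ⧸ M) := by
    rw [← hker]
    exact Nat.card_congr (QuotientGroup.quotientKerEquivOfSurjective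
      ((QuotientGroup.mk' M).comp f)
      ((QuotientGroup.mk'_surjective M).comp hf)).toEquiv
  exact h2 ▸ h1

/-- Dedekind identity, version with `W ≤ Z`. -/
lemma aux_dedekind₁ (L : Subgroup X) [L.Normal] {W Z : Subgroup X} (h : W ≤ Z) :
    (W ⊔ L) ⊓ Z = W ⊔ (L ⊓ Z) := by
  apply le_antisymm
  · intro z hz
    rw [Subgroup.mem_inf] at hz
    obtain ⟨hz1, hz2⟩ := hz
    have hz1' : z ∈ (↑W * ↑L : Set X) := by rw [← Subgroup.mul_normal]; exact hz1
    obtain ⟨w, hw, n, hn, rfl⟩ := hz1'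
    have hnZ : n ∈ Z := by
      have := Z.mul_mem (Z.inv_mem (h hw)) hz2
      simpa [inv_mul_cancel_left] using this
    exact Subgroup.mul_mem _ (Subgroup.mem_sup_left hw)
      (Subgroup.mem_sup_right ⟨hn, hnZ⟩)
  · exact le_inf (sup_le le_sup_left (inf_le_left.trans le_sup_right))
      (sup_le h inf_le_right)

/-- Dedekind identity, version with `L ≤ A`. -/
lemma aux_dedekind₂ (L : Subgroup X) [L.Normal] {B A : Subgroup X} (h : L ≤ A) :
    (B ⊔ L) ⊓ A = (B ⊓ A) ⊔ L := by
  apply le_antisymm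
  · intro z hz
    rw [Subgroup.mem_inf] at hz
    obtain ⟨hz1, hz2⟩ := hz
    have hz1' : z ∈ (↑B * ↑L : Set X) := by rw [← Subgroup.mul_normal]; exact hz1
    obtain ⟨b, hb, n, hn, rfl⟩ := hz1'
    have hbA : b ∈ A := by
      have := A.mul_mem hz2 (A.inv_mem (h hn))
      simpa [mul_inv_cancel_right] using this
    exact Subgroup.mul_mem _ (Subgroup.mem_sup_left ⟨hb, hbA⟩)
      (Subgroup.mem_sup_right hn)
  · exact sup_le (le_inf (inf_le_left.trans le_sup_left) inf_le_right)
      (le_inf le_sup_right h)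

lemma aux_map_inf_of_ker_le (f : X →* Y) {H K : Subgroup X} (h : f.ker ≤ K) :
    (H ⊓ K).map f = H.map f ⊓ K.map f := by
  apply le_antisymm (Subgroup.map_inf_le H K f)
  rintro y ⟨⟨a, ha, rfl⟩, ⟨b, hb, hab⟩⟩
  have hba : b⁻¹ * a ∈ f.ker := by
    rw [MonoidHom.mem_ker, map_mul, map_inv, hab, inv_mul_cancel]
  have haK : a ∈ K := by
    have := K.mul_mem hb (h hba)
    simpa [mul_inv_cancel_left] using this
  exact ⟨a, ⟨ha, haK⟩, rfl⟩

end AuxLemmas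
section TransferLemmas

open Function

variable {X Y : Type*} [Group X] [Group Y]

lemma aux_isModular_comap (f : X →* Y) (hf : Surjective f) {M : Subgroup Y}
    (hM : IsModularSubgroup M) : IsModularSubgroup (M.comap f) := by
  obtain ⟨h1, h2⟩ := hM
  have hker : f.ker ≤ M.comap f := fun x hx => by
    simp [Subgroup.mem_comap, MonoidHom.mem_ker.mp hx, M.one_mem]
  constructor
  · intro A Z hAZ
    apply le_antisymm
    · exact sup_le (le_inf le_sup_left hAZ)
        (le_inf (inf_le_left.trans le_sup_right) inf_le_right)
    · intro z hz
      rw [Subgroup.mem_inf] at hz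
      obtain ⟨hz1, hz2⟩ := hz
      have hfz : f z ∈ (A.map f ⊔ M) ⊓ Z.map f := by
        constructor
        · have : f z ∈ (A ⊔ M.comap f).map f := Subgroup.mem_map_of_mem f hz1
          rwa [Subgroup.map_sup, Subgroup.map_comap_eq_self_of_surjective hf] at this
        · exact Subgroup.mem_map_of_mem f hz2
      rw [← h1 (A.map f) (Z.map f) (Subgroup.map_mono hAZ)] at hfz
      have hz' : z ∈ (A.map f ⊔ (M ⊓ Z.map f)).comap f := hfz
      rw [← Subgroup.comap_sup_eq f _ _ hf, Subgroup.comap_inf, Subgroup.comap_map_eq,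
        Subgroup.comap_map_eq] at hz'
      -- hz' : z ∈ (A ⊔ f.ker) ⊔ (M.comap f ⊓ (Z ⊔ f.ker))
      have hded : M.comap f ⊓ (Z ⊔ f.ker) = (Z ⊓ M.comap f) ⊔ f.ker := by
        rw [inf_comm]
        exact aux_dedekind₂ f.ker hker
      rw [hded] at hz'
      set W := A ⊔ (M.comap f ⊓ Z) with hW
      have hWZ : W ≤ Z := sup_le hAZ inf_le_right
      have hle : (A ⊔ f.ker) ⊔ ((Z ⊓ M.comap f) ⊔ f.ker) ≤ W ⊔ f.ker := by
        refine sup_le (sup_le (le_sup_left.trans' le_sup_left) le_sup_right)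
          (sup_le ?_ le_sup_right)
        rw [inf_comm]
        exact le_sup_left.trans' le_sup_right
      have hz'' : z ∈ (W ⊔ f.ker) ⊓ Z := ⟨hle hz', hz2⟩
      rw [aux_dedekind₁ f.ker hWZ] at hz''
      have : W ⊔ (f.ker ⊓ Z) ≤ W := by
        refine sup_le le_rfl ?_
        rw [hW]
        exact le_sup_right.trans' (inf_le_inf_right Z hker)
      exact this hz''
  · intro B Z hMZ
    apply le_antisymm
    · exact sup_le (le_inf le_sup_left hMZ)
        (le_inf (inf_le_left.trans le_sup_right) inf_le_right)
    · intro z hz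
      rw [Subgroup.mem_inf] at hz
      obtain ⟨hz1, hz2⟩ := hz
      have hMZ' : M ≤ Z.map f := by
        have := Subgroup.map_mono hMZ (f := f)
        rwa [Subgroup.map_comap_eq_self_of_surjective hf] at this
      have hfz : f z ∈ (M ⊔ B.map f) ⊓ Z.map f := by
        constructor
        · have : f z ∈ (M.comap f ⊔ B).map f := Subgroup.mem_map_of_mem f hz1
          rwa [Subgroup.map_sup, Subgroup.map_comap_eq_self_of_surjective hf] at this
        · exact Subgroup.mem_map_of_mem f hz2
      rw [← h2 (B.map f) (Z.map f) hMZ'] at hfz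
      have hz' : z ∈ (M ⊔ (B.map f ⊓ Z.map f)).comap f := hfz
      rw [← Subgroup.comap_sup_eq f _ _ hf, Subgroup.comap_inf, Subgroup.comap_map_eq,
        Subgroup.comap_map_eq] at hz'
      -- hz' : z ∈ M.comap f ⊔ ((B ⊔ f.ker) ⊓ (Z ⊔ f.ker))
      have hZk : Z ⊔ f.ker = Z := sup_eq_left.mpr (hker.trans hMZ)
      rw [hZk, aux_dedekind₂ f.ker (hker.trans hMZ)] at hz'
      -- hz' : z ∈ M.comap f ⊔ ((B ⊓ Z) ⊔ f.ker)
      have : M.comap f ⊔ ((B ⊓ Z) ⊔ f.ker) ≤ M.comap f ⊔ (B ⊓ Z) := by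
        refine sup_le le_sup_left (sup_le le_sup_right (hker.trans le_sup_left))
      exact this hz'

lemma aux_isModular_map (f : X →* Y) (hf : Surjective f) {M : Subgroup X}
    (hM : IsModularSubgroup M) : IsModularSubgroup (M.map f) := by
  obtain ⟨h1, h2⟩ := hM
  constructor
  · intro A Z hAZ
    have key := congrArg (Subgroup.map f)
      (h1 (A.comap f) (Z.comap f) (Subgroup.comap_mono hAZ))
    rw [Subgroup.map_sup, aux_map_inf_of_ker_le f (Subgroup.ker_le_comap f Z),
      aux_map_inf_of_ker_le f (Subgroup.ker_le_comap f Z), Subgroup.map_sup,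
      Subgroup.map_comap_eq_self_of_surjective hf,
      Subgroup.map_comap_eq_self_of_surjective hf] at key
    exact key
  · intro B Z hMZ
    have hMZ' : M ≤ Z.comap f := (Subgroup.le_comap_map f M).trans (Subgroup.comap_mono hMZ)
    have key := congrArg (Subgroup.map f) (h2 (B.comap f) (Z.comap f) hMZ')
    rw [Subgroup.map_sup, aux_map_inf_of_ker_le f (Subgroup.ker_le_comap f Z),
      aux_map_inf_of_ker_le f (Subgroup.ker_le_comap f Z), Subgroup.map_sup,
      Subgroup.map_comap_eq_self_of_surjective hf,
      Subgroup.map_comap_eq_self_of_surjective hf] at key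
    exact key

end TransferLemmas
section SubnormalTransfer

open Function

variable {X Y : Type*} [Group X] [Group Y]

lemma aux_subgroupOf_normal_comap (f : X →* Y) {A B : Subgroup Y} (_hAB : A ≤ B)
    (hn : (A.subgroupOf B).Normal) : ((A.comap f).subgroupOf (B.comap f)).Normal := by
  constructor
  rintro x hx g
  rw [Subgroup.mem_subgroupOf] at hx ⊢
  have key := hn.conj_mem ⟨f ↑x, x.2⟩ (by simpa [Subgroup.mem_subgroupOf] using hx) ⟨f ↑g, g.2⟩
  rw [Subgroup.mem_subgroupOf] at key
  simpa [Subgroup.mem_comap, map_mul, map_inv] using key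

lemma aux_subgroupOf_normal_map (f : X →* Y) {A B : Subgroup X} (hAB : A ≤ B)
    (hn : (A.subgroupOf B).Normal) : ((A.map f).subgroupOf (B.map f)).Normal := by
  constructor
  rintro x hx g
  rw [Subgroup.mem_subgroupOf] at hx ⊢
  obtain ⟨a, ha, hax⟩ := hx
  obtain ⟨b, hb, hbg⟩ := g.2
  have key := hn.conj_mem ⟨a, hAB ha⟩ (by simpa [Subgroup.mem_subgroupOf] using ha) ⟨b, hb⟩
  rw [Subgroup.mem_subgroupOf] at key
  refine ⟨b * a * b⁻¹, key, ?_⟩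
  push_cast
  rw [map_mul, map_mul, map_inv, hax, hbg]

lemma aux_sigmaStep_comap (σ : SigmaPartition) (f : X →* Y) (hf : Surjective f)
    {A B : Subgroup Y} (h : SigmaStep σ A B) :
    SigmaStep σ (A.comap f) (B.comap f) := by
  obtain ⟨hAB, hc⟩ := h
  refine ⟨Subgroup.comap_mono hAB, ?_⟩
  rcases hc with hn | hp
  · exact Or.inl (aux_subgroupOf_normal_comap f hAB hn)
  · right
    refine aux_isSigmaPrimaryCard_of_dvd ?_ hp
    set ρ := f.subgroupComap B with hρ
    have hρs : Surjective ρ := aux_subgroupComap_surjective f hf B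
    apply aux_card_quotient_dvd_of_comap_le ρ hρs
    haveI : ((A.subgroupOf B).normalCore.comap ρ).Normal :=
      (Subgroup.normalCore_normal _).comap ρ
    apply Subgroup.normal_le_normalCore.mpr
    intro x hx
    have hmem : ρ x ∈ A.subgroupOf B := (A.subgroupOf B).normalCore_le hx
    rw [Subgroup.mem_subgroupOf] at hmem ⊢
    exact hmem
  
lemma aux_sigmaStep_map (σ : SigmaPartition) (f : X →* Y) (hf : Surjective f)
    {A B : Subgroup X} (h : SigmaStep σ A B) :
    SigmaStep σ (A.map f) (B.map f) := by
  obtain ⟨hAB, hc⟩ := h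
  refine ⟨Subgroup.map_mono hAB, ?_⟩
  rcases hc with hn | hp
  · exact Or.inl (aux_subgroupOf_normal_map f hAB hn)
  · right
    refine aux_isSigmaPrimaryCard_of_dvd ?_ hp
    set ρ := f.subgroupMap B with hρ
    have hρs : Surjective ρ := f.subgroupMap_surjective B
    apply aux_card_quotient_dvd_of_le_comap ρ hρs
    rw [← Subgroup.map_le_iff_le_comap]
    haveI : ((A.subgroupOf B).normalCore.map ρ).Normal :=
      (Subgroup.normalCore_normal _).map ρ hρs
    apply Subgroup.normal_le_normalCore.mpr
    rintro y ⟨x, hx, rfl⟩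
    have hmem : x ∈ A.subgroupOf B := (A.subgroupOf B).normalCore_le hx
    rw [Subgroup.mem_subgroupOf] at hmem ⊢
    exact Subgroup.mem_map_of_mem f hmem

lemma aux_isSigmaSubnormal_comap (σ : SigmaPartition) (f : X →* Y) (hf : Surjective f)
    {A : Subgroup Y} (h : IsSigmaSubnormal σ A) : IsSigmaSubnormal σ (A.comap f) := by
  obtain ⟨n, c, hc0, hcl, hstep⟩ := h
  exact ⟨n, fun i => (c i).comap f, by simp only [hc0], by simp only [hcl, Subgroup.comap_top],
    fun i => aux_sigmaStep_comap σ f hf (hstep i)⟩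

lemma aux_isSigmaSubnormal_map (σ : SigmaPartition) (f : X →* Y) (hf : Surjective f)
    {A : Subgroup X} (h : IsSigmaSubnormal σ A) : IsSigmaSubnormal σ (A.map f) := by
  obtain ⟨n, c, hc0, hcl, hstep⟩ := h
  exact ⟨n, fun i => (c i).map f, by simp only [hc0], by simp only [hcl, Subgroup.map_top_of_surjective f hf],
    fun i => aux_sigmaStep_map σ f hf (hstep i)⟩

lemma aux_isSigmaQuasinormal_comap (σ : SigmaPartition) (f : X →* Y) (hf : Surjective f)
    {A : Subgroup Y} (h : IsSigmaQuasinormal σ A) : IsSigmaQuasinormal σ (A.comap f) :=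
  ⟨aux_isSigmaSubnormal_comap σ f hf h.1, aux_isModular_comap f hf h.2⟩

lemma aux_isSigmaQuasinormal_map (σ : SigmaPartition) (f : X →* Y) (hf : Surjective f)
    {A : Subgroup X} (h : IsSigmaQuasinormal σ A) : IsSigmaQuasinormal σ (A.map f) :=
  ⟨aux_isSigmaSubnormal_map σ f hf h.1, aux_isModular_map f hf h.2⟩

end SubnormalTransfer
/-- Lemma 2.4: every quotient of a QσT-group is a QσT-group. -/
theorem qSigmaT_quotient (σ : SigmaPartition) (G : Type*) [Group G] [Finite G]
    (h : IsQSigmaT σ G) (N : Subgroup G) [N.Normal] :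
    IsQSigmaT σ (G ⧸ N) := by
  intro H K hHK h1 h2
  set π := QuotientGroup.mk' N with hπdef
  have hπ : Function.Surjective π := QuotientGroup.mk'_surjective N
  have hHK' : H.comap π ≤ K.comap π := Subgroup.comap_mono hHK
  have hK' : IsSigmaQuasinormal σ (K.comap π) := aux_isSigmaQuasinormal_comap σ π hπ h2
  set ρ := π.subgroupComap K with hρdef
  have hρ : Function.Surjective ρ := aux_subgroupComap_surjective π hπ K
  have hsub : (H.subgroupOf K).comap ρ = (H.comap π).subgroupOf (K.comap π) := by
    ext x
    simp only [Subgroup.mem_comap, Subgroup.mem_subgroupOf]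
    exact Iff.rfl
  have hH'K' : IsSigmaQuasinormal σ ((H.comap π).subgroupOf (K.comap π)) := by
    rw [← hsub]
    exact aux_isSigmaQuasinormal_comap σ ρ hρ h1
  have hH' : IsSigmaQuasinormal σ (H.comap π) := h (H.comap π) (K.comap π) hHK' hH'K' hK'
  have hmap : (H.comap π).map π = H := Subgroup.map_comap_eq_self_of_surjective hπ H
  rw [← hmap]
  exact aux_isSigmaQuasinormal_map σ π hπ hH'
end

section
/- If a finite group G is a QσT-group, then for every normal subgroup R of G the quotient G/R satisfies Q_{σ(p,q)} for every pair of primes (p, q) for which a non-abelian P-group of type (p, q) exists. -/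
open Subgroup
open scoped Pointwise

/-!
Subgroups of a non-abelian P-group `P = A ⋊ ⟨t⟩` form a modular lattice, so every subgroup of
`P` is modular in `P`. Let `π : G → (G ⧸ R) ⧸ N` and take full preimages `P* = π⁻¹ P`,
`S* = π⁻¹ S`. Modularity of `S` in `P` lifts to `S*` in `P*`, and `S*` is σ-subnormal in `P*`
because `P*` modulo the core of `S*` is a quotient of the σ-primary group `P`. As `P*` is normal
in `G`, it is σ-quasinormal, so the QσT property makes `S*` σ-quasinormal in `G`; in particular
`S*` is modular, and modularity passes to its image `S`.
-/

theorem IsSigmaPrimaryCard.of_dvd {σ : SigmaPartition} {m n : ℕ} (hn : IsSigmaPrimaryCard σ n)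
    (hmn : m ∣ n) : IsSigmaPrimaryCard σ m :=
  let ⟨s, hs, hdiv⟩ := hn
  ⟨s, hs, fun p hp hpm => hdiv p hp (hpm.trans hmn)⟩

section SigmaSubnormal

variable {σ : SigmaPartition} {G : Type*} [Group G]

theorem isSigmaSubnormal_of_sigmaStep_top {A : Subgroup G} (h : SigmaStep σ A ⊤) :
    IsSigmaSubnormal σ A :=
  ⟨1, ![A, ⊤], rfl, rfl, fun i => by fin_cases i; exact h⟩

theorem Subgroup.Normal.isSigmaSubnormal {A : Subgroup G} (hA : A.Normal) :
    IsSigmaSubnormal σ A :=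
  isSigmaSubnormal_of_sigmaStep_top ⟨le_top, Or.inl (hA.subgroupOf ⊤)⟩

theorem isSigmaSubnormal_of_ker_le {H : Type*} [Group H] {f : G →* H}
    (hf : Function.Surjective f) (hH : IsSigmaPrimary σ H) {A : Subgroup G} (hA : f.ker ≤ A) :
    IsSigmaSubnormal σ A := by
  refine isSigmaSubnormal_of_sigmaStep_top ⟨le_top, Or.inr (IsSigmaPrimaryCard.of_dvd hH ?_)⟩
  let f' := f.comp (⊤ : Subgroup G).subtype
  have hf' : Function.Surjective f' := fun y => let ⟨x, hx⟩ := hf y; ⟨⟨x, mem_top x⟩, hx⟩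
  have hker : f'.ker ≤ (A.subgroupOf ⊤).normalCore :=
    normal_le_normalCore.mpr fun x hx => hA hx
  calc _ = (A.subgroupOf ⊤).normalCore.index := rfl
    _ ∣ f'.ker.index := index_dvd_of_le hker
    _ = Nat.card H := by rw [index_ker, f'.range_eq_top_of_surjective hf', card_top]

end SigmaSubnormal

section Modular

variable {G H : Type*} [Group G] [Group H]

theorem IsModularSubgroup.of_sup_inf_le {M : Subgroup G}
    (h₁ : ∀ X Z : Subgroup G, X ≤ Z → (X ⊔ M) ⊓ Z ≤ X ⊔ M ⊓ Z)
    (h₂ : ∀ Y Z : Subgroup G, M ≤ Z → (M ⊔ Y) ⊓ Z ≤ M ⊔ Y ⊓ Z) : IsModularSubgroup M :=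
  ⟨fun X Z hXZ => le_antisymm
      (le_inf (sup_le_sup_left inf_le_left _) (sup_le hXZ inf_le_right)) (h₁ X Z hXZ),
    fun Y Z hMZ => le_antisymm
      (le_inf (sup_le_sup_left inf_le_left _) (sup_le hMZ inf_le_right)) (h₂ Y Z hMZ)⟩

theorem isModularSubgroup_of_isModularLattice [IsModularLattice (Subgroup G)]
    (M : Subgroup G) : IsModularSubgroup M :=
  .of_sup_inf_le (fun _ _ h => sup_inf_le_assoc_of_le _ h)
    (fun _ _ h => sup_inf_le_assoc_of_le _ h)

theorem Subgroup.coe_mul_subset_sup (K L : Subgroup G) :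
    (K : Set G) * L ⊆ (K ⊔ L : Subgroup G) :=
  Set.mul_subset_iff.mpr fun _ hx _ hy => mul_mem (mem_sup_left hx) (mem_sup_right hy)

theorem Subgroup.Normal.isModularSubgroup {N : Subgroup G} (hN : N.Normal) :
    IsModularSubgroup N := by
  refine .of_sup_inf_le (fun X Z hXZ => ?_) (fun Y Z hNZ => ?_)
  · rw [← SetLike.coe_subset_coe, coe_inf, mul_normal, ← mul_inf_assoc _ _ _ hXZ]
    exact coe_mul_subset_sup _ _
  · rw [← SetLike.coe_subset_coe, coe_inf, normal_mul, ← mul_inf_assoc _ _ _ hNZ]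
    exact coe_mul_subset_sup _ _

theorem Subgroup.map_inf_comap (f : G →* H) (K : Subgroup G) (L : Subgroup H) :
    (K ⊓ L.comap f).map f = K.map f ⊓ L := by
  refine le_antisymm (le_inf (map_mono inf_le_left) (map_le_iff_le_comap.mpr inf_le_right)) ?_
  rintro _ ⟨⟨x, hx, rfl⟩, hxL⟩
  exact ⟨x, ⟨hx, hxL⟩, rfl⟩

theorem IsModularSubgroup.map {f : G →* H} (hf : Function.Surjective f) {M : Subgroup G}
    (hM : IsModularSubgroup M) : IsModularSubgroup (M.map f) := by
  refine .of_sup_inf_le (fun X Z hXZ => ?_) (fun Y Z hMZ => ?_)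
  · have h := congrArg (Subgroup.map f) (hM.1 (X.comap f) (Z.comap f) (comap_mono hXZ))
    rw [Subgroup.map_sup, map_inf_comap, map_inf_comap, Subgroup.map_sup,
      map_comap_eq_self_of_surjective hf] at h
    exact h.ge
  · have h := congrArg (Subgroup.map f)
      (hM.2 (Y.comap f) (Z.comap f) (map_le_iff_le_comap.mp hMZ))
    rw [← comap_inf, map_inf_comap, Subgroup.map_sup, Subgroup.map_sup,
      map_comap_eq_self_of_surjective hf, map_comap_eq_self_of_surjective hf] at h
    exact h.ge

theorem IsModularSubgroup.comap {f : G →* H} (hf : Function.Surjective f) {M : Subgroup H}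
    (hM : IsModularSubgroup M) : IsModularSubgroup (M.comap f) := by
  have hK := f.normal_ker.isModularSubgroup
  have hKM : f.ker ≤ M.comap f := ker_le_comap f M
  have hmapM : (M.comap f).map f = M := map_comap_eq_self_of_surjective hf M
  refine .of_sup_inf_le (fun X Z hXZ => ?_) (fun Y Z hMZ => ?_)
  · have hmap : ((X ⊔ M.comap f) ⊓ Z).map f ≤ (X ⊔ M.comap f ⊓ Z).map f := calc
        _ ≤ (X ⊔ M.comap f).map f ⊓ Z.map f := map_inf_le _ _ _
        _ = (X.map f ⊔ M) ⊓ Z.map f := by rw [Subgroup.map_sup, hmapM]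
        _ = X.map f ⊔ M ⊓ Z.map f := (hM.1 _ _ (map_mono hXZ)).symm
        _ = (X ⊔ M.comap f ⊓ Z).map f := by
          rw [Subgroup.map_sup, inf_comm, ← map_inf_comap, inf_comm]
    calc (X ⊔ M.comap f) ⊓ Z ≤ (X ⊔ M.comap f ⊓ Z ⊔ f.ker) ⊓ Z :=
          le_inf ((map_le_iff_le_comap.mp hmap).trans (comap_map_eq f _).le) inf_le_right
      _ = X ⊔ M.comap f ⊓ Z ⊔ f.ker ⊓ Z := (hK.1 _ _ (sup_le hXZ inf_le_right)).symm
      _ ≤ X ⊔ M.comap f ⊓ Z := sup_le le_rfl (le_sup_of_le_right (inf_le_inf_right _ hKM))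
  · have hKZ : f.ker ≤ Z := hKM.trans hMZ
    have hmap : ((M.comap f ⊔ Y) ⊓ Z).map f ≤ (M.comap f ⊔ Z ⊓ (Y.map f).comap f).map f := calc
        _ ≤ (M.comap f ⊔ Y).map f ⊓ Z.map f := map_inf_le _ _ _
        _ = (M ⊔ Y.map f) ⊓ Z.map f := by rw [Subgroup.map_sup, hmapM]
        _ = M ⊔ Y.map f ⊓ Z.map f := (hM.2 _ _ (hmapM ▸ map_mono hMZ)).symm
        _ = (M.comap f ⊔ Z ⊓ (Y.map f).comap f).map f := by
          rw [Subgroup.map_sup, hmapM, map_inf_comap, inf_comm]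
    have hYZ : Z ⊓ (Y.map f).comap f = f.ker ⊔ Y ⊓ Z := by
      rw [comap_map_eq, inf_comm, sup_comm, hK.2 _ _ hKZ]
    calc (M.comap f ⊔ Y) ⊓ Z ≤ M.comap f ⊔ Z ⊓ (Y.map f).comap f ⊔ f.ker :=
          (map_le_iff_le_comap.mp hmap).trans (comap_map_eq f _).le
      _ ≤ M.comap f ⊔ Y ⊓ Z := by
          rw [hYZ]
          exact sup_le (sup_le le_sup_left (sup_le (hKM.trans le_sup_left) le_sup_right))
            (hKM.trans le_sup_left)

end Modular

section ModularLattice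

variable {X : Type*} [Group X] {A : Subgroup X}

theorem exists_mul_inv_zpow_mem_of_index_prime [A.Normal] (hA : A.index.Prime) {k : X}
    (hk : k ∉ A) (x : X) : ∃ m : ℤ, x * (k ^ m)⁻¹ ∈ A := by
  have := Fact.mk hA
  have htop : zpowers (k : X ⧸ A) = ⊤ :=
    zpowers_eq_top_of_prime_card (index_eq_card A).symm (by rwa [Ne, QuotientGroup.eq_one_iff])
  obtain ⟨m, hm⟩ := mem_zpowers_iff.mp (htop ▸ mem_top (x : X ⧸ A))
  refine ⟨m, ?_⟩
  rw [← div_eq_mul_inv, ← QuotientGroup.eq_iff_div_mem, QuotientGroup.mk_zpow, hm]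

theorem zpow_eq_self_of_pow_eq_one {x : X} {p : ℕ} (hx : x ^ p = 1) {n : ℤ}
    (hn : n ≡ 1 [ZMOD p]) : x ^ n = x := by
  conv_rhs => rw [← zpow_one x]
  exact zpow_eq_zpow_iff_modEq.mpr
    (hn.of_dvd (Int.natCast_dvd_natCast.mpr (orderOf_dvd_of_pow_eq_one hx)))

theorem sup_inf_le_of_not_le_of_not_le {p : ℕ} (hp : p.Prime) (hexp : ∀ a ∈ A, a ^ p = 1)
    (hcomm : ∀ a ∈ A, ∀ b ∈ A, a * b = b * a) (hnormal : ∀ S ≤ A, S.Normal)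
    (hA : A.index.Prime) {H K L : Subgroup X} (hHL : H ≤ L) (hHA : ¬H ≤ A) (hKA : ¬K ≤ A) :
    (H ⊔ K) ⊓ L ≤ H ⊔ K ⊓ L := by
  -- With `h ∈ H \ A`, `k ∈ K \ A` and `d = k h⁻ᵐ ∈ A`, `H ⊔ K = H ⊔ N` for the normal subgroup
  -- `N = (K ⊓ A) ⊔ ⟨d⟩`. An element `w = v dʳ` of `N ⊓ L` with `p ∤ r` is a power of `wᵅ`,
  -- where `α r ≡ 1 [ZMOD p]`, and `wᵅ = (vᵅ k) h⁻ᵐ` lies in `H ⊔ K ⊓ L`.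
  have := hnormal A le_rfl
  obtain ⟨h, hhH, hhA⟩ := SetLike.not_le_iff_exists.mp hHA
  obtain ⟨k, hkK, hkA⟩ := SetLike.not_le_iff_exists.mp hKA
  obtain ⟨m, hdA⟩ := exists_mul_inv_zpow_mem_of_index_prime hA hhA k
  set d := k * (h ^ m)⁻¹ with hd
  have : (zpowers d).Normal := hnormal _ (zpowers_le.mpr hdA)
  let N := K ⊓ A ⊔ zpowers d
  have hN : N.Normal := hnormal N (sup_le inf_le_right (zpowers_le.mpr hdA))
  have hKN : K ≤ H ⊔ N := by
    have hk : k ∈ H ⊔ N := by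
      rw [show k = d * h ^ m by rw [hd]; group]
      exact mul_mem (mem_sup_right (mem_sup_right (mem_zpowers d)))
        (mem_sup_left (zpow_mem hhH m))
    intro x hx
    obtain ⟨j, hj⟩ := exists_mul_inv_zpow_mem_of_index_prime hA hkA x
    rw [show x = x * (k ^ j)⁻¹ * k ^ j by group]
    have hxA : x * (k ^ j)⁻¹ ∈ K ⊓ A := mem_inf.mpr ⟨mul_mem hx (inv_mem (zpow_mem hkK j)), hj⟩
    exact mul_mem (mem_sup_right (mem_sup_left hxA)) (zpow_mem hk j)
  have hNL : N ⊓ L ≤ H ⊔ K ⊓ L := by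
    intro w hw
    obtain ⟨hwN, hwL⟩ := mem_inf.mp hw
    have hwN' : w ∈ ((K ⊓ A : Subgroup X) : Set X) * zpowers d := by
      rw [← mul_normal]; exact hwN
    obtain ⟨v, hv, y, hy, rfl⟩ := Set.mem_mul.mp hwN'
    obtain ⟨hvK, hvA⟩ := mem_inf.mp hv
    obtain ⟨r, rfl⟩ := mem_zpowers_iff.mp hy
    have hwA : v * d ^ r ∈ A := mul_mem hvA (zpow_mem hdA r)
    by_cases hr : (p : ℤ) ∣ r
    · have hdr : d ^ r = 1 := orderOf_dvd_iff_zpow_eq_one.mp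
        ((Int.natCast_dvd_natCast.mpr (orderOf_dvd_of_pow_eq_one (hexp d hdA))).trans hr)
      rw [hdr, mul_one] at hwL ⊢
      exact mem_sup_right ⟨hvK, hwL⟩
    obtain ⟨u, α, hu⟩ := ((Nat.prime_iff_prime_int.mp hp).coprime_iff_not_dvd).mpr hr
    have hαr : α * r ≡ 1 [ZMOD p] := Int.modEq_iff_dvd.mpr ⟨u, by linarith⟩
    have hwα : (v * d ^ r) ^ α = v ^ α * k * (h ^ m)⁻¹ := by
      rw [(Commute.mul_zpow (hcomm v hvA _ (zpow_mem hdA r)) α), ← zpow_mul, mul_comm r,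
        zpow_eq_self_of_pow_eq_one (hexp d hdA) hαr, hd, mul_assoc]
    have hwαmem : (v * d ^ r) ^ α ∈ H ⊔ K ⊓ L := by
      have hkL : v ^ α * k ∈ L := by
        rw [show v ^ α * k = (v * d ^ r) ^ α * h ^ m by rw [hwα]; group]
        exact mul_mem (zpow_mem hwL α) (hHL (zpow_mem hhH m))
      rw [hwα]
      exact mul_mem (mem_sup_right ⟨mul_mem (zpow_mem hvK α) hkK, hkL⟩)
        (mem_sup_left (inv_mem (zpow_mem hhH m)))
    rw [← zpow_eq_self_of_pow_eq_one (hexp _ hwA) hαr, zpow_mul]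
    exact zpow_mem hwαmem r
  calc (H ⊔ K) ⊓ L ≤ (H ⊔ N) ⊓ L := inf_le_inf_right _ (sup_le le_sup_left hKN)
    _ = H ⊔ N ⊓ L := (hN.isModularSubgroup.1 H L hHL).symm
    _ ≤ H ⊔ K ⊓ L := sup_le le_sup_left hNL

theorem isModularLattice_of_index_prime {p : ℕ} (hp : p.Prime) (hexp : ∀ a ∈ A, a ^ p = 1)
    (hcomm : ∀ a ∈ A, ∀ b ∈ A, a * b = b * a) (hnormal : ∀ S ≤ A, S.Normal)
    (hA : A.index.Prime) : IsModularLattice (Subgroup X) := by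
  refine ⟨fun {H} K {L} hHL => ?_⟩
  by_cases hK : K ≤ A
  · exact ((hnormal K hK).isModularSubgroup.1 H L hHL).ge
  by_cases hH : H ≤ A
  · exact ((hnormal H hH).isModularSubgroup.2 K L hHL).ge
  exact sup_inf_le_of_not_le_of_not_le hp hexp hcomm hnormal hA hHL hH hK

theorem normal_of_conj_mem_of_sup_zpowers_eq_top [A.Normal] {S : Subgroup X} {t : X}
    (ht : IsOfFinOrder t) (htop : A ⊔ zpowers t = ⊤) (hcomm : ∀ a ∈ A, ∀ s ∈ S, a * s = s * a)
    (hS : ∀ s ∈ S, t * s * t⁻¹ ∈ S) : S.Normal := by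
  have hpow : ∀ n : ℕ, ∀ s ∈ S, t ^ n * s * (t ^ n)⁻¹ ∈ S := by
    intro n
    induction n with
    | zero => simp
    | succ n ih =>
      intro s hs
      rw [show t ^ (n + 1) * s * (t ^ (n + 1))⁻¹ = t * (t ^ n * s * (t ^ n)⁻¹) * t⁻¹ by group]
      exact hS _ (ih s hs)
  refine ⟨fun s hs g => ?_⟩
  have hg : g ∈ (A : Set X) * zpowers t := by rw [← normal_mul, htop]; trivial
  obtain ⟨a, ha, y, hy, rfl⟩ := Set.mem_mul.mp hg
  obtain ⟨n, rfl⟩ := ht.mem_powers_iff_mem_zpowers.mpr hy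
  rw [show a * t ^ n * s * (a * t ^ n)⁻¹ = a * (t ^ n * s * (t ^ n)⁻¹) * a⁻¹ by group,
    hcomm a ha _ (hpow n s hs), mul_inv_cancel_right]
  exact hpow n s hs

end ModularLattice

theorem IsPGroupOfType.isModularLattice {p q : ℕ} {X : Type*} [Group X]
    (hX : IsPGroupOfType p q X) : IsModularLattice (Subgroup X) := by
  obtain ⟨hp, hq, -, A, t, -, hexp, hcomm, ht, hA, htop, hbot, hS, -⟩ := hX
  have hindex : A.index = q := by
    rw [← ht, ← Nat.card_zpowers]
    refine (isComplement'_of_disjoint_and_mul_eq_univ ?_ ?_).index_eq_card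
    · exact disjoint_iff.mpr (by rw [inf_comm, hbot])
    · rw [← mul_normal, sup_comm, htop, coe_top]
  have htq : IsOfFinOrder t := orderOf_pos_iff.mp (ht ▸ hq.pos)
  refine isModularLattice_of_index_prime hp hexp hcomm (fun S hSA => ?_) (hindex ▸ hq)
  exact normal_of_conj_mem_of_sup_zpowers_eq_top htq htop
    (fun a ha s hs => hcomm a ha s (hSA hs)) (hS S hSA)

theorem qSigmaT_satisfiesQSigmaPQ_general (σ : SigmaPartition) (G : Type*) [Group G]
    (h : IsQSigmaT σ G) (R : Subgroup G) [R.Normal] (p q : ℕ) :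
    SatisfiesQSigmaPQ σ p q (G ⧸ R) := by
  intro N _ _ P hP hPσ hPpq S hSP
  have := hPpq.isModularLattice
  let π : G →* (G ⧸ R) ⧸ N := (QuotientGroup.mk' N).comp (QuotientGroup.mk' R)
  have hπ : Function.Surjective π :=
    (QuotientGroup.mk'_surjective N).comp (QuotientGroup.mk'_surjective R)
  have hf := π.subgroupComap_surjective_of_surjective P hπ
  have hSqn : IsSigmaQuasinormal σ ((S.comap π).subgroupOf (P.comap π)) :=
    ⟨isSigmaSubnormal_of_ker_le hf hPσ fun x hx => by
        rw [mem_subgroupOf, mem_comap, show π x = 1 from congrArg Subtype.val hx]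
        exact one_mem S,
      (isModularSubgroup_of_isModularLattice (S.subgroupOf P)).comap hf⟩
  have hS := h _ _ (comap_mono hSP) hSqn
    ⟨(hP.comap π).isSigmaSubnormal, (hP.comap π).isModularSubgroup⟩
  simpa only [map_comap_eq_self_of_surjective hπ] using hS.2.map hπ

/-- Lemma 2.5: if `G` is a QσT-group, then `G/R` satisfies `Q_{σ(p,q)}` for every
normal subgroup `R` and every pair of primes `(p, q)` for which a non-abelian
P-group of type `(p, q)` exists. -/
theorem qSigmaT_satisfiesQSigmaPQ (σ : SigmaPartition) (G : Type*) [Group G] [Finite G]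
    (h : IsQSigmaT σ G) (R : Subgroup G) [R.Normal] (p q : ℕ)
    (hex : ∃ (X : Type) (g : Group X), letI := g; (Finite X ∧ IsPGroupOfType p q X)) :
    SatisfiesQSigmaPQ σ p q (G ⧸ R) :=
  qSigmaT_satisfiesQSigmaPQ_general σ G h R p q
end

section
/- Let G = D ⋊ M be a soluble finite group such that: D = G^{𝔑_σ} (the σ-nilpotent residual of G) is an abelian Hall subgroup of G of odd order; M is a σ-nilpotent M-group; every element of G induces a power automorphism on D; and for every i, O_{σ_i}(D) has a normal complement in a Hall σ_i-subgroup of G. If A is a σ-primary σ-subnormal subgroup of G with A ≤ M, then D ≤ C_G(A). -/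
open Subgroup
open scoped Pointwise

/-- `X` is σ-nilpotent: an internal direct product of σ-primary (normal) subgroups. -/
def IsSigmaNilpotent (σ : SigmaPartition) (X : Type*) [Group X] : Prop :=
  ∃ (n : ℕ) (H : Fin n → Subgroup X),
    (∀ i, (H i).Normal) ∧ (∀ i, IsSigmaPrimary σ ↥(H i)) ∧
    (⨆ i, H i) = ⊤ ∧
    ∀ i, H i ⊓ (⨆ j ∈ ({j | j ≠ i} : Set (Fin n)), H j) = ⊥

/-- The σ-nilpotent residual `G^{𝔑_σ}`: the smallest normal subgroup of `G`
with σ-nilpotent quotient. -/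
def sigmaNilpotentResidual (σ : SigmaPartition) (G : Type*) [Group G] : Subgroup G :=
  sInf {N : Subgroup G | ∃ h : N.Normal, letI := h; IsSigmaNilpotent σ (G ⧸ N)}

/-- `H` is a Hall `s`-subgroup of the ambient group: every prime dividing `|H|`
lies in `s` and no prime dividing the index of `H` lies in `s`. -/
def IsHallSigmaSubgroup {G : Type*} [Group G] (s : Set ℕ) (H : Subgroup G) : Prop :=
  (∀ p : ℕ, p.Prime → p ∣ Nat.card ↥H → p ∈ s) ∧
  (∀ p : ℕ, p.Prime → p ∣ H.index → p ∉ s)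

/-- `O_s(X)`: the largest normal subgroup of `X` all of whose prime divisors lie in `s`. -/
def sigmaCore (s : Set ℕ) (X : Type*) [Group X] : Subgroup X :=
  sSup {P : Subgroup X | P.Normal ∧ ∀ p : ℕ, p.Prime → p ∣ Nat.card ↥P → p ∈ s}

/-!
Let `A` be a `σᵢ`-group, `a ∈ A`, and split `d ∈ D` as `v * w` with `v` a `σᵢ'`-element and `w`
a `σᵢ`-element of `⟨d⟩`.

Since `a` acts on `⟨v⟩` by a power map, `⁅a, v⁆` is a `σᵢ'`-element of `⟨v⟩`. In each step `Y ≤ B`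
of a σ-subnormal chain from `A` to `G`, `v` conjugates `a` back into `Y`: either `Y ⊴ B`, or
`B / Y_B` is σ-primary and then `v ∈ Y_B` or `a ∈ Y_B`. So `⁅a, v⁆` lies one term lower in the
chain, `a` centralizes it by induction, and `⁅a, v⁆ ^ |a| = ⁅a ^ |a|, v⁆ = 1` forces `⁅a, v⁆ = 1`.

For `w ∈ W = O_{σᵢ}(D)`, let `H = W ⋊ K` be the Hall `σᵢ`-subgroup. Then `[W, K] ≤ W ∩ K = 1`
and `W` is abelian, so `H ≤ C_G(W)`; being normal of `σᵢ'`-index, `C_G(W)` contains the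
`σᵢ`-element `a`.
-/

def IsPiNumber (π : Set ℕ) (n : ℕ) : Prop :=
  ∀ p : ℕ, p.Prime → p ∣ n → p ∈ π

namespace IsPiNumber

variable {π π' : Set ℕ} {m n : ℕ}

theorem of_dvd (h : IsPiNumber π n) (hmn : m ∣ n) : IsPiNumber π m :=
  fun p hp hpm => h p hp (hpm.trans hmn)

theorem mono (h : IsPiNumber π n) (hππ' : π ⊆ π') : IsPiNumber π' n :=
  fun p hp hpn => hππ' (h p hp hpn)

theorem coprime (hm : IsPiNumber π m) (hn : IsPiNumber πᶜ n) : m.Coprime n :=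
  Nat.coprime_of_dvd fun p hp hpm hpn => hn p hp hpn (hm p hp hpm)

theorem eq_one (h : IsPiNumber π n) (h' : IsPiNumber πᶜ n) : n = 1 :=
  (Nat.coprime_self n).1 (h.coprime h')

end IsPiNumber

theorem Nat.isPiNumber_prod_pow_factorization_filter (P : ℕ → Prop) [DecidablePred P] (n : ℕ) :
    IsPiNumber {p | P p} ((n.factorization.filter P).prod (· ^ ·)) := by
  intro p hp hpd
  have hprimes : ∀ q ∈ (n.factorization.filter P).support, q.Prime := fun q hq => by
    rw [Finsupp.support_filter, Finset.mem_filter, Nat.support_factorization] at hq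
    exact Nat.prime_of_mem_primeFactors hq.1
  have hpf := Nat.mem_primeFactors.2 ⟨hp, hpd, (Nat.prod_pow_pos_of_zero_notMem_support
    fun h => Nat.not_prime_zero (hprimes 0 h)).ne'⟩
  rw [← Nat.support_factorization, Nat.prod_pow_factorization_eq_self hprimes,
    Finsupp.support_filter, Finset.mem_filter] at hpf
  exact hpf.2

theorem Nat.exists_mul_eq_isPiNumber_compl (π : Set ℕ) {n : ℕ} (hn : n ≠ 0) :
    ∃ n₁ n₂ : ℕ, n₁ * n₂ = n ∧ IsPiNumber π n₁ ∧ IsPiNumber πᶜ n₂ := by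
  classical
  exact ⟨_, _, (Finsupp.prod_filter_mul_prod_filter_not (· ∈ π) n.factorization (· ^ ·)).trans
    (Nat.prod_factorization_pow_eq_self hn),
    Nat.isPiNumber_prod_pow_factorization_filter (· ∈ π) n,
    Nat.isPiNumber_prod_pow_factorization_filter (· ∉ π) n⟩

open scoped commutatorElement

section Group

variable {G : Type*} [Group G]

theorem IsOfFinOrder.exists_mul_eq_isPiNumber_orderOf (π : Set ℕ) {g : G} (hg : IsOfFinOrder g) :
    ∃ v ∈ zpowers g, ∃ w ∈ zpowers g, v * w = g ∧
      IsPiNumber πᶜ (orderOf v) ∧ IsPiNumber π (orderOf w) := by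
  obtain ⟨n₁, n₂, hn, hn₁, hn₂⟩ := Nat.exists_mul_eq_isPiNumber_compl π hg.orderOf_pos.ne'
  obtain ⟨x, y, hxy⟩ := Nat.isCoprime_iff_coprime.2 (hn₁.coprime hn₂)
  have hord₁ : orderOf (g ^ n₁) ∣ n₂ :=
    orderOf_dvd_of_pow_eq_one (by rw [← pow_mul, hn, pow_orderOf_eq_one])
  have hord₂ : orderOf (g ^ n₂) ∣ n₁ :=
    orderOf_dvd_of_pow_eq_one (by rw [← pow_mul, mul_comm, hn, pow_orderOf_eq_one])
  refine ⟨(g ^ n₁) ^ x, zpow_mem (pow_mem (mem_zpowers g) _) _,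
    (g ^ n₂) ^ y, zpow_mem (pow_mem (mem_zpowers g) _) _, ?_,
    hn₂.of_dvd ((orderOf_dvd_of_mem_zpowers (zpow_mem_zpowers _ _)).trans hord₁),
    hn₁.of_dvd ((orderOf_dvd_of_mem_zpowers (zpow_mem_zpowers _ _)).trans hord₂)⟩
  rw [← zpow_natCast, ← zpow_natCast, ← zpow_mul, ← zpow_mul, ← zpow_add,
    show (n₁ : ℤ) * x + n₂ * y = 1 by linear_combination hxy, zpow_one]

theorem Subgroup.mem_of_coprime_orderOf_index {N : Subgroup G} [N.Normal] {x : G}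
    (h : (orderOf x).Coprime N.index) : x ∈ N := by
  have hdvd_index : orderOf (x : G ⧸ N) ∣ N.index :=
    orderOf_dvd_of_pow_eq_one ((QuotientGroup.eq_one_iff _).2 (N.pow_index_mem x))
  have := h.coprime_dvd_left (orderOf_map_dvd (QuotientGroup.mk' N) x) |>.eq_one_of_dvd hdvd_index
  rwa [orderOf_eq_one_iff, QuotientGroup.mk'_apply, QuotientGroup.eq_one_iff] at this

theorem commutatorElement_eq_one_of_commute_of_coprime {a v : G} (hcomm : Commute a ⁅a, v⁆)
    (hcop : (orderOf a).Coprime (orderOf ⁅a, v⁆)) : ⁅a, v⁆ = 1 := by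
  have hpow (n : ℕ) : ⁅a ^ n, v⁆ = ⁅a, v⁆ ^ n := by
    induction n with
    | zero => simp
    | succ n ih => calc
        ⁅a ^ (n + 1), v⁆ = a * ⁅a ^ n, v⁆ * a⁻¹ * ⁅a, v⁆ := by
          simp only [commutatorElement_def]; group
        _ = ⁅a, v⁆ ^ (n + 1) := by
          rw [ih, (hcomm.pow_right n).eq, mul_inv_cancel_right, pow_succ]
  have hdvd : orderOf ⁅a, v⁆ ∣ orderOf a := orderOf_dvd_of_pow_eq_one
    (by rw [← hpow, pow_orderOf_eq_one, commutatorElement_one_left])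
  exact orderOf_eq_one_iff.1 (hcop.symm.eq_one_of_dvd hdvd)

theorem SigmaStep.conj_mem {σ : SigmaPartition} {π : Set ℕ} (hπ : π ∈ σ.blocks)
    {Y B : Subgroup G} (h : SigmaStep σ Y B) {a v : G} (ha : a ∈ Y)
    (haπ : IsPiNumber π (orderOf a)) (hv : v ∈ B) (hvπ : IsPiNumber πᶜ (orderOf v)) :
    v * a * v⁻¹ ∈ Y := by
  obtain ⟨hYB, hnormal | ⟨π', hπ', hcard⟩⟩ := h
  · exact (normal_subgroupOf_iff hYB).1 hnormal a v ha hv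
  set N := (Y.subgroupOf B).normalCore
  have hcard : IsPiNumber π' N.index := by rw [index_eq_card]; exact hcard
  have hmem : ∀ x : B, x ∈ N → (x : G) ∈ Y := fun x hx => mem_subgroupOf.1 (normalCore_le _ hx)
  by_cases hπ'π : π' = π
  · subst hπ'π
    have hvY := hmem _ (mem_of_coprime_orderOf_index (x := ⟨v, hv⟩)
      (by rw [orderOf_mk]; exact (hcard.coprime hvπ).symm))
    exact Y.mul_mem (Y.mul_mem hvY ha) (Y.inv_mem hvY)
  · have hπ'_compl : π' ⊆ πᶜ := (σ.pairwise_disjoint π hπ π' hπ' (Ne.symm hπ'π)).subset_compl_left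
    have haN : (⟨a, hYB ha⟩ : B) ∈ N := mem_of_coprime_orderOf_index
      (by rw [orderOf_mk]; exact haπ.coprime (hcard.mono hπ'_compl))
    exact hmem _ ((normalCore_normal _).conj_mem _ haN ⟨v, hv⟩)

theorem IsSigmaSubnormal.commute_of_conj_mem_zpowers {σ : SigmaPartition} {π : Set ℕ}
    (hπ : π ∈ σ.blocks) {A D : Subgroup G} (hA : IsSigmaSubnormal σ A)
    (hAπ : IsPiNumber π (Nat.card A)) {a : G} (ha : a ∈ A)
    (hD : ∀ x ∈ D, a * x * a⁻¹ ∈ zpowers x) {v : G} (hvD : v ∈ D)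
    (hvπ : IsPiNumber πᶜ (orderOf v)) : Commute a v := by
  obtain ⟨n, c, rfl, hc, hstep⟩ := hA
  have haπ : IsPiNumber π (orderOf a) := hAπ.of_dvd (orderOf_dvd_natCard _ ha)
  have hac : ∀ i, a ∈ c i := fun i => Fin.induction ha (fun i h => (hstep i).1 h) i
  suffices ∀ i, ∀ v ∈ D, v ∈ c i → IsPiNumber πᶜ (orderOf v) → Commute a v from
    this (Fin.last n) v hvD (hc ▸ mem_top v) hvπ
  intro i
  induction i using Fin.induction with
  | zero =>
    intro v _ hv hvπ
    rw [orderOf_eq_one_iff.1 ((hAπ.of_dvd (orderOf_dvd_natCard _ hv)).eq_one hvπ)]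
    exact Commute.one_right a
  | succ i ih =>
    intro v hvD hv hvπ
    have hu : ⁅a, v⁆ ∈ zpowers v := mul_mem (hD v hvD) (inv_mem (mem_zpowers v))
    have huπ : IsPiNumber πᶜ (orderOf ⁅a, v⁆) := hvπ.of_dvd (orderOf_dvd_of_mem_zpowers hu)
    have huc : ⁅a, v⁆ ∈ c i.castSucc := by
      rw [commutatorElement_def, mul_assoc, mul_assoc, ← mul_assoc v]
      exact mul_mem (hac _) ((hstep i).conj_mem hπ (inv_mem (hac _))
        (by rwa [orderOf_inv]) hv hvπ)
    exact commutatorElement_eq_one_iff_commute.1 <| commutatorElement_eq_one_of_commute_of_coprime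
      (ih _ (zpowers_le.2 hvD hu) huc huπ) (haπ.coprime huπ)

theorem sup_le_centralizer_of_inf_eq_bot {W K : Subgroup G} (hW : W.Normal)
    (hK : (K.subgroupOf (W ⊔ K)).Normal) (hWK : W ⊓ K = ⊥) (hWW : W ≤ centralizer W) :
    W ⊔ K ≤ centralizer W := by
  refine sup_le hWW fun k hk => mem_centralizer_iff.2 fun w hw => ?_
  have hcomm : w * k * w⁻¹ * k⁻¹ ∈ W ⊓ K := by
    refine ⟨?_, mul_mem ((normal_subgroupOf_iff le_sup_right).1 hK k w hk
      (Subgroup.mem_sup_left hw)) (K.inv_mem hk)⟩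
    rw [mul_assoc, mul_assoc, ← mul_assoc k]
    exact mul_mem hw (hW.conj_mem _ (inv_mem hw) k)
  rw [hWK, mem_bot] at hcomm
  exact commutatorElement_eq_one_iff_commute.1 hcomm

end Group

theorem mem_sigmaCore {π : Set ℕ} {X : Type*} [Group X] {x : X} (hx : (zpowers x).Normal)
    (hxπ : IsPiNumber π (orderOf x)) : x ∈ sigmaCore π X := by
  have : zpowers x ≤ sigmaCore π X := le_sSup ⟨hx, by rw [Nat.card_zpowers]; exact hxπ⟩
  exact this (mem_zpowers x)

theorem lemma27_general (σ : SigmaPartition) (G : Type*) [Group G] [Finite G]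
    (D : Subgroup G)
    (habel : ∀ a ∈ D, ∀ b ∈ D, a * b = b * a)
    (hpower : ∀ g : G, ∀ S : Subgroup G, S ≤ D → ∀ s ∈ S, g * s * g⁻¹ ∈ S)
    (hcompl : ∀ s ∈ σ.blocks, ∃ H : Subgroup G, IsHallSigmaSubgroup s H ∧
      ∃ K : Subgroup G, K ≤ H ∧ (K.subgroupOf H).Normal ∧
        (sigmaCore s ↥D).map D.subtype ⊔ K = H ∧
        (sigmaCore s ↥D).map D.subtype ⊓ K = ⊥)
    (A : Subgroup G) (hA1 : IsSigmaPrimary σ ↥A) (hA2 : IsSigmaSubnormal σ A) :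
    D ≤ Subgroup.centralizer (A : Set G) := by
  obtain ⟨s, hs, hAs : IsPiNumber s (Nat.card A)⟩ := hA1
  obtain ⟨H, hH, K, -, hK, hsup, hinf⟩ := hcompl s hs
  set W := (sigmaCore s D).map D.subtype
  have hWD : W ≤ D := map_subtype_le _
  have hW : W.Normal := ⟨fun x hx g => hpower g W hWD x hx⟩
  have hHW : H ≤ centralizer W := hsup ▸ sup_le_centralizer_of_inf_eq_bot hW (hsup ▸ hK) hinf
    fun x hx => mem_centralizer_iff.2 fun y hy => habel y (hWD hy) x (hWD hx)
  intro d hd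
  refine mem_centralizer_iff.2 fun a ha => ?_
  have haπ : IsPiNumber s (orderOf a) := hAs.of_dvd (orderOf_dvd_natCard _ ha)
  obtain ⟨v, hv, w, hw, rfl, hvπ, hwπ⟩ :=
    (isOfFinOrder_of_finite d).exists_mul_eq_isPiNumber_orderOf s
  have hav : Commute a v := hA2.commute_of_conj_mem_zpowers hs hAs ha
    (fun x hx => hpower a _ (zpowers_le.2 hx) x (mem_zpowers x)) (zpowers_le.2 hd hv) hvπ
  have hwW : w ∈ W := by
    have hwD := zpowers_le.2 hd hw
    refine ⟨⟨w, hwD⟩, mem_sigmaCore ⟨fun x _ g => ?_⟩ (by rwa [orderOf_mk]), rfl⟩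
    rwa [(show Commute g x from Subtype.ext (habel _ g.2 _ x.2)).mul_inv_cancel]
  have haW : a ∈ centralizer W := mem_of_coprime_orderOf_index
    (haπ.coprime fun p hp hpd => hH.2 p hp (hpd.trans (index_dvd_of_le hHW)))
  exact (hav.mul_right (mem_centralizer_iff.1 haW w hwW).symm).eq

/-- Lemma 2.7. -/
theorem lemma27 (σ : SigmaPartition) (G : Type*) [Group G] [Finite G]
    (hsol : IsSolvable G) (D M : Subgroup G) (hDn : D.Normal)
    (hprod : D ⊔ M = ⊤) (hint : D ⊓ M = ⊥)
    (hres : D = sigmaNilpotentResidual σ G)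
    (habel : ∀ a ∈ D, ∀ b ∈ D, a * b = b * a)
    (hhall : Nat.Coprime (Nat.card ↥D) D.index)
    (hodd : Odd (Nat.card ↥D))
    (hMnil : IsSigmaNilpotent σ ↥M) (hMmod : IsModularLattice (Subgroup ↥M))
    (hpower : ∀ g : G, ∀ S : Subgroup G, S ≤ D → ∀ s ∈ S, g * s * g⁻¹ ∈ S)
    (hcompl : ∀ s ∈ σ.blocks, ∃ H : Subgroup G, IsHallSigmaSubgroup s H ∧
      ∃ K : Subgroup G, K ≤ H ∧ (K.subgroupOf H).Normal ∧
        (sigmaCore s ↥D).map D.subtype ⊔ K = H ∧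
        (sigmaCore s ↥D).map D.subtype ⊓ K = ⊥)
    (A : Subgroup G) (hA1 : IsSigmaPrimary σ ↥A) (hA2 : IsSigmaSubnormal σ A)
    (hA3 : A ≤ M) :
    D ≤ Subgroup.centralizer (A : Set G) :=
  lemma27_general σ G D habel hpower hcompl A hA1 hA2
end

section
/- Let G be a finite group, p a prime, and Z a normal subgroup of G contained in the hypercenter Z_∞(G). If G/Z has a normal Sylow p-subgroup, then G has a normal Sylow p-subgroup. -/
open Subgroup
open scoped Pointwise

/-! The hypercenter of a finite group is a term `ζ_m(G)` of the upper central series. Let `N` be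
the preimage of the normal Sylow `p`-subgroup of `G/Z`. Since `Z ∩ N ≤ ζ_m(N)` and `N/Z` is a
`p`-group, hence nilpotent, `N` is nilpotent. Every Sylow `p`-subgroup `Q` of `G` lies in `N`, so
it is normal in `N`, and the Frattini argument `G = N_G(Q) N` gives `N_G(Q) = G`. -/

namespace Subgroup

variable {G : Type*} [Group G]

theorem upperCentralSeries_subgroupOf_le (H : Subgroup G) (n : ℕ) :
    (upperCentralSeries G n).subgroupOf H ≤ upperCentralSeries H n := by
  induction n with
  | zero => simp
  | succ n ih =>
    intro x hx
    rw [mem_upperCentralSeries_succ_iff]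
    exact fun y ↦ ih (mem_upperCentralSeries_succ_iff.mp hx y)

theorem exists_upperCentralSeries_eq_iSup [Finite G] :
    ∃ m, upperCentralSeries G m = ⨆ n, upperCentralSeries G n := by
  obtain ⟨m, hm⟩ := WellFoundedGT.monotone_chain_condition ⟨_, upperCentralSeries_mono G⟩
  refine ⟨m, le_antisymm (le_iSup _ m) (iSup_le fun n ↦ ?_)⟩
  rcases le_total n m with hnm | hmn
  · exact upperCentralSeries_mono G hnm
  · exact (hm n hmn).ge

theorem comap_upperCentralSeries_le {H : Type*} [Group H] (f : G →* H) {m : ℕ}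
    (hf : f.ker ≤ upperCentralSeries G m) (k : ℕ) :
    (upperCentralSeries H k).comap f ≤ upperCentralSeries G (m + k) := by
  induction k with
  | zero => simpa [← MonoidHom.comap_bot] using hf
  | succ k ih =>
    intro x hx
    rw [← add_assoc, mem_upperCentralSeries_succ_iff]
    intro y
    refine ih ?_
    simpa using mem_upperCentralSeries_succ_iff.mp hx (f y)

end Subgroup

theorem Group.isNilpotent_of_ker_le_upperCentralSeries {G H : Type*} [Group G] [Group H]
    [IsNilpotent H] (f : G →* H) {m : ℕ} (hf : f.ker ≤ Subgroup.upperCentralSeries G m) :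
    IsNilpotent G := by
  obtain ⟨k, hk⟩ := IsNilpotent.nilpotent H
  refine ⟨m + k, top_le_iff.mp ?_⟩
  simpa [hk] using Subgroup.comap_upperCentralSeries_le f hf k

namespace Sylow

variable {G : Type*} [Group G] {p : ℕ} [Fact p.Prime]

theorem le_comap_of_normal [Finite G] {G' : Type*} [Group G'] {f : G →* G'}
    (hf : Function.Surjective f) (P : Sylow p G) (Q : Sylow p G') [(Q : Subgroup G').Normal] :
    (P : Subgroup G) ≤ (Q : Subgroup G').comap f := by
  have : Finite G' := Finite.of_surjective f hf
  have := unique_of_normal Q ‹_›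
  rw [← Subsingleton.elim (P.mapSurjective hf) Q, coe_mapSurjective]
  exact Subgroup.le_comap_map f P

theorem normal_of_normal_subtype {N : Subgroup G} [N.Normal] [Finite (Sylow p N)]
    (P : Sylow p G) (hP : (P : Subgroup G) ≤ N) (h : (P.subtype hP : Subgroup N).Normal) :
    (P : Subgroup G).Normal := by
  rw [coe_subtype, Subgroup.normal_subgroupOf_iff_le_normalizer hP] at h
  have hFrattini := P.normalizer_sup_eq_top' hP
  exact normalizer_eq_top_iff.mp (top_le_iff.mp (hFrattini.ge.trans (sup_le le_rfl h)))

end Sylow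

/-- Lemma 2.9: if `Z ≤ Z_∞(G)` is normal and `G/Z` is p-closed, then `G` is p-closed. -/
theorem pClosed_of_quotient_hypercenter (G : Type*) [Group G] [Finite G]
    (p : ℕ) (hp : p.Prime) (Z : Subgroup G) [Z.Normal]
    (hZ : Z ≤ ⨆ n : ℕ, _root_.upperCentralSeries G n)
    (h : ∃ P : Sylow p (G ⧸ Z), (P : Subgroup (G ⧸ Z)).Normal) :
    ∃ P : Sylow p G, (P : Subgroup G).Normal := by
  have : Fact p.Prime := ⟨hp⟩
  obtain ⟨P, hP⟩ := h
  set N := (P : Subgroup (G ⧸ Z)).comap (QuotientGroup.mk' Z)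
  obtain ⟨m, hm⟩ := exists_upperCentralSeries_eq_iSup (G := G)
  have : Group.IsNilpotent P := P.isPGroup'.isNilpotent
  have : Group.IsNilpotent N := by
    refine Group.isNilpotent_of_ker_le_upperCentralSeries (m := m)
      (((QuotientGroup.mk' Z).domRestrict N).codRestrict (P : Subgroup (G ⧸ Z))
        fun x ↦ mem_comap.mp x.2) ?_
    rw [MonoidHom.ker_codRestrict, MonoidHom.ker_domRestrict, QuotientGroup.ker_mk']
    exact (subgroupOf_mono N (hZ.trans hm.ge)).trans (upperCentralSeries_subgroupOf_le N m)
  obtain ⟨Q⟩ : Nonempty (Sylow p G) := inferInstance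
  have hQN : (Q : Subgroup G) ≤ N := Q.le_comap_of_normal QuotientGroup.mk_surjective P
  exact ⟨Q, Q.normal_of_normal_subtype hQN
    (Sylow.normal_of_normalizerCondition Group.normalizerCondition_of_isNilpotent _)⟩
end

section
/- If A and B are normal subgroups of a finite group G, then every chief factor H/K of G with H ≤ AB is G-isomorphic either to a chief factor of G below A (i.e., one of the form H_1/K_1 with H_1 ≤ A) or to a chief factor of G between B ∩ A and B (i.e., one of the form H_1/K_1 with B ∩ A ≤ K_1 and H_1 ≤ B). -/
open Subgroup
open scoped Pointwise

section
variable {G : Type*} [Group G]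

/-- `H/K` is a chief factor of the ambient group. -/
def ChiefFactor (H K : Subgroup G) : Prop :=
  H.Normal ∧ K.Normal ∧ K < H ∧
    ∀ N : Subgroup G, N.Normal → K ≤ N → N ≤ H → N = K ∨ N = H

/-- The factors `H/K` and `H₁/K₁` are G-isomorphic: there is a relation which is the
graph of a multiplicative, conjugation-equivariant bijection between the cosets. -/
def GIsoFactors (H K H₁ K₁ : Subgroup G) : Prop :=
  ∃ ρ : G → G → Prop,
    (∀ a b : G, ρ a b → a ∈ H ∧ b ∈ H₁) ∧
    (∀ a ∈ H, ∃ b : G, ρ a b) ∧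
    (∀ b ∈ H₁, ∃ a : G, ρ a b) ∧
    (∀ a b a' b' : G, ρ a b → ρ a' b' → (a⁻¹ * a' ∈ K ↔ b⁻¹ * b' ∈ K₁)) ∧
    (∀ a b a' b' : G, ρ a b → ρ a' b' → ρ (a * a') (b * b')) ∧
    (∀ a b : G, ρ a b → ∀ g : G, ρ (g * a * g⁻¹) (g * b * g⁻¹))

end

section
variable {G : Type*} [Group G]

theorem dedekind_aux (X Y Z : Subgroup G) [Y.Normal] (h : X ≤ Z) :
    (X ⊔ Y) ⊓ Z = X ⊔ (Y ⊓ Z) := by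
  apply le_antisymm
  · rintro g ⟨hg1, hg2⟩
    have : g ∈ (↑(X ⊔ Y) : Set G) := hg1
    rw [Subgroup.mul_normal] at this
    obtain ⟨x, hx, y, hy, rfl⟩ := this
    exact mul_mem (le_sup_left (α := Subgroup G) hx)
      (le_sup_right (α := Subgroup G) (mem_inf.mpr ⟨hy, (mul_mem_cancel_left (h hx)).mp hg2⟩))
  · exact le_inf (sup_le_sup_left inf_le_left X) (sup_le h inf_le_right)

theorem key_lemma (M C H K : Subgroup G) (hM : M.Normal) (hC : C.Normal)
    (hHK : ChiefFactor H K) (hKM : K ≤ M) (hHM : H ⊓ M = K) (hle : H ≤ M ⊔ C) :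
    ChiefFactor ((H ⊔ M) ⊓ C) (M ⊓ C) ∧
    (∃ ρ : G → G → Prop,
      (∀ a b : G, ρ a b → a ∈ H ∧ b ∈ (H ⊔ M) ⊓ C) ∧
      (∀ a ∈ H, ∃ b : G, ρ a b) ∧
      (∀ b ∈ (H ⊔ M) ⊓ C, ∃ a : G, ρ a b) ∧
      (∀ a b a' b' : G, ρ a b → ρ a' b' → (a⁻¹ * a' ∈ K ↔ b⁻¹ * b' ∈ M ⊓ C)) ∧
      (∀ a b a' b' : G, ρ a b → ρ a' b' → ρ (a * a') (b * b')) ∧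
      (∀ a b : G, ρ a b → ∀ g : G, ρ (g * a * g⁻¹) (g * b * g⁻¹))) := by
  obtain ⟨hH, hK, hKltH, hmin⟩ := hHK
  haveI := hH; haveI := hK; haveI := hM; haveI := hC
  set H₂ := (H ⊔ M) ⊓ C with hH₂
  set K₂ := M ⊓ C with hK₂
  have star : M ⊔ H₂ = H ⊔ M := by
    have h1 : (M ⊔ C) ⊓ (H ⊔ M) = M ⊔ (C ⊓ (H ⊔ M)) :=
      dedekind_aux M C (H ⊔ M) le_sup_right
    have h2 : H ⊔ M ≤ M ⊔ C := sup_le hle le_sup_left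
    rw [inf_eq_right.mpr h2] at h1
    rw [hH₂, inf_comm, ← h1]
  have hchief : ChiefFactor H₂ K₂ := by
    refine ⟨inferInstance, inferInstance, ?_, ?_⟩
    · refine lt_of_le_of_ne (inf_le_inf_right C le_sup_right) ?_
      intro h
      have h1 : H₂ ≤ M := h ▸ inf_le_left
      have h2 : H ⊔ M = M := by rw [← star, sup_eq_left.mpr h1]
      have hHleM : H ≤ M := le_sup_left.trans h2.le
      have : K = H := by rw [← hHM, inf_eq_left.mpr hHleM]
      exact absurd this hKltH.ne
    · intro N hN hKN hNH
      haveI := hN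
      have hNC : N ≤ C := hNH.trans inf_le_right
      have hNHM : N ≤ H ⊔ M := hNH.trans inf_le_left
      have hKMN : K ≤ (M ⊔ N) ⊓ H := le_inf (hKM.trans le_sup_left) hKltH.le
      rcases hmin ((M ⊔ N) ⊓ H) inferInstance hKMN inf_le_right with hcase | hcase
      · left
        have h1 : (M ⊔ H) ⊓ (M ⊔ N) = M ⊔ (H ⊓ (M ⊔ N)) :=
          dedekind_aux M H (M ⊔ N) le_sup_left
        rw [show H ⊓ (M ⊔ N) = K from by rw [inf_comm]; exact hcase,
          sup_eq_left.mpr hKM] at h1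
        have hNM : N ≤ M := by
          have : N ≤ (M ⊔ H) ⊓ (M ⊔ N) :=
            le_inf (hNHM.trans (sup_comm H M).le) le_sup_right
          exact this.trans h1.le
        exact le_antisymm (le_inf hNM hNC) hKN
      · right
        have hHMN : H ≤ M ⊔ N := by rw [← hcase]; exact inf_le_left
        have heq : M ⊔ N = H ⊔ M := by
          apply le_antisymm
          · exact sup_le le_sup_right hNHM
          · exact sup_le hHMN le_sup_left
        have h2 : (N ⊔ M) ⊓ C = N ⊔ (M ⊓ C) := dedekind_aux N M C hNC
        rw [sup_comm N M, heq] at h2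
        rw [hH₂, h2, sup_eq_left.mpr hKN]
  refine ⟨hchief, ?_⟩
  refine ⟨fun a b => a ∈ H ∧ b ∈ H₂ ∧ b⁻¹ * a ∈ M, fun a b h => ⟨h.1, h.2.1⟩, ?_, ?_, ?_, ?_, ?_⟩
  · intro a ha
    have : a ∈ (↑(M ⊔ H₂) : Set G) := by
      rw [star]; exact_mod_cast (le_sup_left : H ≤ H ⊔ M) ha
    rw [Subgroup.normal_mul] at this
    obtain ⟨m, hm, b, hb, rfl⟩ := this
    refine ⟨b, ha, hb, ?_⟩
    have e : b⁻¹ * (m * b) = b⁻¹ * m * b := by group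
    rw [e]; exact hM.conj_mem' m hm b
  · intro b hb
    have : b ∈ (↑(H ⊔ M) : Set G) := by
      exact_mod_cast (inf_le_left : H₂ ≤ H ⊔ M) hb
    rw [Subgroup.mul_normal] at this
    obtain ⟨h, hh, m, hm, rfl⟩ := this
    refine ⟨h, hh, hb, ?_⟩
    have e : (h * m)⁻¹ * h = m⁻¹ := by group
    rw [e]; exact inv_mem hm
  · rintro a b a' b' ⟨ha, hb, hab⟩ ⟨ha', hb', hab'⟩
    have key : a⁻¹ * a' ∈ M ↔ b⁻¹ * b' ∈ M := by
      constructor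
      · intro h
        have e : b⁻¹ * b' = (b⁻¹ * a) * (a⁻¹ * a') * (a'⁻¹ * b') := by group
        rw [e]; exact mul_mem (mul_mem hab h) (by simpa using inv_mem hab')
      · intro h
        have e : a⁻¹ * a' = (b⁻¹ * a)⁻¹ * (b⁻¹ * b') * (b'⁻¹ * a') := by group
        rw [e]; exact mul_mem (mul_mem (inv_mem hab) h) hab'
    constructor
    · intro h
      exact mem_inf.mpr ⟨key.mp (hKM h), mul_mem (inv_mem (mem_inf.mp hb).2) (mem_inf.mp hb').2⟩
    · intro h
      have : a⁻¹ * a' ∈ H ⊓ M := mem_inf.mpr ⟨mul_mem (inv_mem ha) ha', key.mpr (mem_inf.mp h).1⟩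
      rw [hHM] at this; exact this
  · rintro a b a' b' ⟨ha, hb, hab⟩ ⟨ha', hb', hab'⟩
    refine ⟨mul_mem ha ha', mul_mem hb hb', ?_⟩
    have e : (b * b')⁻¹ * (a * a') = b'⁻¹ * (b⁻¹ * a) * b' * (b'⁻¹ * a') := by group
    rw [e]; exact mul_mem (hM.conj_mem' _ hab b') hab'
  · rintro a b ⟨ha, hb, hab⟩ g
    refine ⟨hH.conj_mem a ha g, hchief.1.conj_mem b hb g, ?_⟩
    have e : (g * b * g⁻¹)⁻¹ * (g * a * g⁻¹) = g * (b⁻¹ * a) * g⁻¹ := by group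
    rw [e]; exact hM.conj_mem _ hab g

end

/-- Lemma 2.11: every chief factor of `G` below `AB` is G-isomorphic either to a chief
factor of `G` below `A` or to a chief factor of `G` between `B ⊓ A` and `B`. -/
theorem chiefFactor_of_mul_normal (G : Type*) [Group G] [Finite G]
    (A B : Subgroup G) (hA : A.Normal) (hB : B.Normal)
    (H K : Subgroup G) (hHK : ChiefFactor H K) (hle : H ≤ A ⊔ B) :
    (∃ H₁ K₁ : Subgroup G, ChiefFactor H₁ K₁ ∧ H₁ ≤ A ∧ GIsoFactors H K H₁ K₁) ∨
    (∃ H₁ K₁ : Subgroup G, ChiefFactor H₁ K₁ ∧ B ⊓ A ≤ K₁ ∧ H₁ ≤ B ∧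
      GIsoFactors H K H₁ K₁) := by
  obtain ⟨hH, hK, hKlt, hmin⟩ := hHK
  haveI := hH; haveI := hK; haveI := hA; haveI := hB
  have hKH : K ≤ H := hKlt.le
  rcases hmin (H ⊓ (K ⊔ A)) inferInstance (le_inf hKH le_sup_left) inf_le_left with h | h
  · -- H ⊓ (K ⊔ A) = K : use M = K ⊔ A, C = B
    right
    have hle' : H ≤ (K ⊔ A) ⊔ B :=
      hle.trans (sup_le (le_sup_of_le_left le_sup_right) le_sup_right)
    obtain ⟨hchief, hiso⟩ := key_lemma (K ⊔ A) B H K inferInstance hB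
      ⟨hH, hK, hKlt, hmin⟩ le_sup_left h hle'
    exact ⟨(H ⊔ (K ⊔ A)) ⊓ B, (K ⊔ A) ⊓ B, hchief,
      le_inf (inf_le_right.trans le_sup_right) inf_le_left, inf_le_right, hiso⟩
  · -- H ⊓ (K ⊔ A) = H : H ≤ K ⊔ A, use M = K, C = A
    left
    have hle' : H ≤ K ⊔ A := by rw [← h]; exact inf_le_right
    obtain ⟨hchief, hiso⟩ := key_lemma K A H K hK hA
      ⟨hH, hK, hKlt, hmin⟩ le_rfl (inf_eq_right.mpr hKH) hle'
    exact ⟨(H ⊔ K) ⊓ A, K ⊓ A, hchief, inf_le_right, hiso⟩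
end

section
/- Let (D, Z(D); U_1, …, U_k) be a Robinson complex of a finite group G. Then for each i, the quotient U_i'/(U_i' ∩ Z(D)) is a simple non-abelian group and U_i' ∩ Z(D) = Φ(U_i') = Z(U_i'); in particular, U_i' is a quasi-simple group (a perfect group whose quotient by its center is simple). -/
open Subgroup
open scoped Pointwise

/-! Write `V = U'`, where `U = U i` and `Z = Z(D)`. Because `Z` is central in `U`,
`⁅a z, b z'⁆ = ⁅a, b⁆` for `z, z' ∈ Z`, so `⁅U, U⁆ = ⁅N, N⁆` whenever `N Z = U`. Simplicity of
`U/Z` gives `V Z = U`, hence `V` is perfect; and for a normal subgroup `N` of `V` the product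
`N Z` is normal in `U`, so either `N ≤ Z` or `V = ⁅N, N⁆ ≤ N`. Applied to `Z(V)` and `Φ(V)`
this gives `V ∩ Z = Z(V) = Φ(V)`, and applied to the preimages of normal subgroups of
`V/Z(V)` it gives simplicity. -/

open scoped commutatorElement

section

variable {G : Type*} [Group G]

theorem commutatorElement_mul_left_of_commute {a z b : G} (h : Commute z b) :
    ⁅a * z, b⁆ = ⁅a, b⁆ := by
  simp only [commutatorElement_def, mul_inv_rev, mul_assoc, h.eq, mul_inv_cancel_left]

namespace Subgroup

theorem commutator_sup_left_of_le_centralizer {A B Z : Subgroup G} (hA : A ≤ normalizer Z)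
    (hB : B ≤ centralizer Z) : ⁅A ⊔ Z, B⁆ = ⁅A, B⁆ := by
  refine le_antisymm (commutator_le.mpr fun x hx b hb => ?_)
    (commutator_mono le_sup_left le_rfl)
  rw [← SetLike.mem_coe, coe_mul_of_left_le_normalizer_right A Z hA] at hx
  obtain ⟨a, ha, z, hz, rfl⟩ := hx
  rw [commutatorElement_mul_left_of_commute (mem_centralizer_iff.mp (hB hb) z hz)]
  exact commutator_mem_commutator ha hb

theorem commutator_sup_sup_of_le_centralizer {A B Z : Subgroup G} (hA : A ≤ centralizer Z)
    (hB : B ≤ centralizer Z) (hZ : Z ≤ centralizer Z) : ⁅A ⊔ Z, B ⊔ Z⁆ = ⁅A, B⁆ := by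
  rw [commutator_sup_left_of_le_centralizer (hA.trans (centralizer_le_normalizer _))
      (sup_le hB hZ), commutator_comm,
    commutator_sup_left_of_le_centralizer (hB.trans (centralizer_le_normalizer _)) hA,
    commutator_comm]

theorem map_subtype_center (H : Subgroup G) :
    (center H).map H.subtype = H ⊓ centralizer H := by
  ext x
  simp [mem_center_iff, mem_centralizer_iff, and_comm]

end Subgroup

/-- A maximal subgroup `M` not containing the center would give
`⊤ = ⁅M ⊔ center, M ⊔ center⁆ = ⁅M, M⁆ ≤ M`. -/
theorem center_le_frattini_of_commutator_eq_top (h : commutator G = ⊤) :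
    center G ≤ frattini G := by
  refine le_iInf₂ fun M hM => ?_
  by_contra hle
  have hsup : M ⊔ center G = ⊤ := hM.2 _ (left_lt_sup.mpr hle)
  have hcentral : ∀ K : Subgroup G, K ≤ centralizer (center G) := fun K => by
    rw [centralizer_center]
    exact le_top
  apply hM.1
  rw [eq_top_iff, ← h, commutator_def, ← hsup,
    commutator_sup_sup_of_le_centralizer (hcentral M) (hcentral M) (hcentral _)]
  exact commutator_le_self M

theorem exists_mul_ne_mul_of_commutator_eq_top [Nontrivial G] (h : commutator G = ⊤) :
    ∃ x y : G, x * y ≠ y * x := by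
  by_contra! hcomm
  have hbot : commutator G = ⊥ := (commutator_eq_bot_iff G).mpr ⟨⟨hcomm⟩⟩
  exact bot_ne_top (hbot.symm.trans h)

theorem commutator_eq_top_of_surjective {H : Type*} [Group H] {f : G →* H}
    (hf : Function.Surjective f) (h : commutator G = ⊤) : commutator H = ⊤ := by
  rw [commutator_def, ← map_top_of_surjective f hf, ← map_commutator, ← commutator_def, h]

theorem QuotientGroup.isSimpleGroup_of_forall_normal {N : Subgroup G} [N.Normal] (hN : N ≠ ⊤)
    (h : ∀ P : Subgroup G, P.Normal → P ≤ N ∨ P = ⊤) : IsSimpleGroup (G ⧸ N) := by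
  have : Nontrivial (G ⧸ N) := QuotientGroup.nontrivial_iff.mpr hN
  refine ⟨fun Q hQ => ?_⟩
  have hQ_eq : (Q.comap (QuotientGroup.mk' N)).map (QuotientGroup.mk' N) = Q :=
    map_comap_eq_self_of_surjective (QuotientGroup.mk'_surjective N) Q
  rcases h _ (hQ.comap _) with hle | htop
  · left
    rwa [← hQ_eq, Subgroup.map_eq_bot_iff, QuotientGroup.ker_mk']
  · right
    rw [← hQ_eq, htop, map_top_of_surjective _ (QuotientGroup.mk'_surjective N)]

/-- `Z` is central in `U` and `U / Z` is a non-abelian simple group. -/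
structure IsCentralNonabelianSimpleSection (Z U : Subgroup G) : Prop where
  le : Z ≤ U
  le_centralizer : U ≤ centralizer Z
  eq_or_eq : ∀ N : Subgroup G, Z ≤ N → N ≤ U → (N.subgroupOf U).Normal → N = Z ∨ N = U
  not_commutator_le : ¬ ⁅U, U⁆ ≤ Z

namespace IsCentralNonabelianSimpleSection

variable {Z U : Subgroup G}

theorem commutator_sup_eq (hS : IsCentralNonabelianSimpleSection Z U) : ⁅U, U⁆ ⊔ Z = U := by
  have hle : ⁅U, U⁆ ⊔ Z ≤ U := sup_le (commutator_le_self U) hS.le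
  refine (hS.eq_or_eq _ le_sup_right hle ?_).resolve_left
    fun h => hS.not_commutator_le (h ▸ le_sup_left)
  rw [normal_subgroupOf_iff_le_normalizer hle, le_normalizer_iff_commutator_le_right]
  exact (commutator_mono le_rfl hle).trans le_sup_left

theorem commutator_eq_of_sup_eq (hS : IsCentralNonabelianSimpleSection Z U) {N : Subgroup G}
    (hN : N ≤ U) (h : N ⊔ Z = U) : ⁅U, U⁆ = ⁅N, N⁆ := by
  have hZ := hS.le_centralizer
  rw [← h]
  exact commutator_sup_sup_of_le_centralizer (hN.trans hZ) (hN.trans hZ) (hS.le.trans hZ)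

theorem commutator_commutator_eq (hS : IsCentralNonabelianSimpleSection Z U) :
    ⁅⁅U, U⁆, ⁅U, U⁆⁆ = ⁅U, U⁆ :=
  (hS.commutator_eq_of_sup_eq (commutator_le_self U) hS.commutator_sup_eq).symm

theorem le_or_commutator_le (hS : IsCentralNonabelianSimpleSection Z U) {N : Subgroup G}
    (hN : N ≤ ⁅U, U⁆) (hnorm : (N.subgroupOf ⁅U, U⁆).Normal) : N ≤ Z ∨ ⁅U, U⁆ ≤ N := by
  have hNU : N ≤ U := hN.trans (commutator_le_self U)
  have hsup : N ⊔ Z ≤ U := sup_le hNU hS.le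
  have hU : U ≤ normalizer N ⊓ normalizer Z := by
    rw [← hS.commutator_sup_eq]
    refine sup_le (le_inf ((normal_subgroupOf_iff_le_normalizer hN).mp hnorm) ?_)
      (le_inf ?_ le_normalizer)
    · exact (commutator_le_self U).trans
        (hS.le_centralizer.trans (centralizer_le_normalizer _))
    · exact (le_centralizer_iff.mp (hNU.trans hS.le_centralizer)).trans
        (centralizer_le_normalizer _)
  have hnorm_sup : ((N ⊔ Z).subgroupOf U).Normal :=
    (normal_subgroupOf_iff_le_normalizer hsup).mpr
      (hU.trans (normalizer_inf_normalizer_le_normalizer_sup N Z))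
  rcases hS.eq_or_eq (N ⊔ Z) le_sup_right hsup hnorm_sup with h | h
  · exact .inl (h ▸ le_sup_left)
  · exact .inr ((hS.commutator_eq_of_sup_eq hNU h).trans_le (commutator_le_self N))

theorem map_subtype_le_or_eq_top (hS : IsCentralNonabelianSimpleSection Z U)
    {P : Subgroup (⁅U, U⁆ : Subgroup G)} (hP : P.Normal) :
    P.map (⁅U, U⁆ : Subgroup G).subtype ≤ Z ∨ P = ⊤ := by
  have hsub : (P.map (⁅U, U⁆ : Subgroup G).subtype).subgroupOf ⁅U, U⁆ = P :=
    comap_map_eq_self_of_injective (subtype_injective _) P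
  refine (hS.le_or_commutator_le (map_subtype_le P) (by rwa [hsub])).imp_right fun h => ?_
  rw [eq_top_iff, ← map_le_map_iff_of_injective (subtype_injective _),
    ← MonoidHom.range_eq_map, range_subtype]
  exact h

theorem commutator_derived_eq_top (hS : IsCentralNonabelianSimpleSection Z U) :
    commutator (⁅U, U⁆ : Subgroup G) = ⊤ := by
  apply map_injective (⁅U, U⁆ : Subgroup G).subtype_injective
  rw [map_subtype_commutator, hS.commutator_commutator_eq, ← MonoidHom.range_eq_map,
    range_subtype]

theorem nontrivial (hS : IsCentralNonabelianSimpleSection Z U) :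
    Nontrivial (⁅U, U⁆ : Subgroup G) :=
  (nontrivial_iff_ne_bot (⁅U, U⁆ : Subgroup G)).mpr
    fun h => hS.not_commutator_le (h ▸ bot_le)

theorem center_ne_top (hS : IsCentralNonabelianSimpleSection Z U) :
    center (⁅U, U⁆ : Subgroup G) ≠ ⊤ := by
  have := hS.nontrivial
  intro h
  have hbot := (commutator_eq_bot_iff_center_eq_top _).mpr h
  rw [hS.commutator_derived_eq_top] at hbot
  exact top_ne_bot hbot

theorem inf_eq_map_center (hS : IsCentralNonabelianSimpleSection Z U) :
    ⁅U, U⁆ ⊓ Z = (center (⁅U, U⁆ : Subgroup G)).map (⁅U, U⁆ : Subgroup G).subtype := by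
  refine le_antisymm ?_ (le_inf (map_subtype_le _) ?_)
  · rw [map_subtype_center]
    exact inf_le_inf_left _
      (le_centralizer_iff.mp ((commutator_le_self U).trans hS.le_centralizer))
  · exact (hS.map_subtype_le_or_eq_top inferInstance).resolve_right hS.center_ne_top

theorem le_center_or_eq_top (hS : IsCentralNonabelianSimpleSection Z U)
    {P : Subgroup (⁅U, U⁆ : Subgroup G)} (hP : P.Normal) :
    P ≤ center (⁅U, U⁆ : Subgroup G) ∨ P = ⊤ := by
  refine (hS.map_subtype_le_or_eq_top hP).imp_left fun h => ?_
  rw [← map_le_map_iff_of_injective (subtype_injective _), ← hS.inf_eq_map_center]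
  exact le_inf (map_subtype_le _) h

theorem isSimpleGroup_quotient_center (hS : IsCentralNonabelianSimpleSection Z U) :
    IsSimpleGroup ((⁅U, U⁆ : Subgroup G) ⧸ center (⁅U, U⁆ : Subgroup G)) :=
  QuotientGroup.isSimpleGroup_of_forall_normal hS.center_ne_top
    fun _ => hS.le_center_or_eq_top

theorem exists_mul_ne_mul_quotient_center (hS : IsCentralNonabelianSimpleSection Z U) :
    ∃ x y : (⁅U, U⁆ : Subgroup G) ⧸ center (⁅U, U⁆ : Subgroup G), x * y ≠ y * x := by
  have := QuotientGroup.nontrivial_iff.mpr hS.center_ne_top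
  exact exists_mul_ne_mul_of_commutator_eq_top
    (commutator_eq_top_of_surjective (QuotientGroup.mk'_surjective _)
      hS.commutator_derived_eq_top)

theorem inf_eq_map_frattini [Finite G] (hS : IsCentralNonabelianSimpleSection Z U) :
    ⁅U, U⁆ ⊓ Z = (frattini (⁅U, U⁆ : Subgroup G)).map (⁅U, U⁆ : Subgroup G).subtype := by
  refine le_antisymm ?_ ?_
  · rw [hS.inf_eq_map_center]
    exact map_mono (center_le_frattini_of_commutator_eq_top hS.commutator_derived_eq_top)
  · refine le_inf (map_subtype_le _)
      ((hS.map_subtype_le_or_eq_top inferInstance).resolve_right fun h => ?_)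
    have := hS.nontrivial
    exact bot_ne_top (frattini_nongenerating (K := ⊥) (by rw [h, bot_sup_eq]))

end IsCentralNonabelianSimpleSection

end

theorem IsRobinsonComplex.isCentralNonabelianSimpleSection {G : Type*} [Group G]
    {D Z : Subgroup G} {k : ℕ} {U : Fin k → Subgroup G} (h : IsRobinsonComplex G D Z k U)
    (i : Fin k) : IsCentralNonabelianSimpleSection Z (U i) := by
  obtain ⟨-, -, -, hZ, -, hU, -, -, hnab, hmax, -⟩ := h
  rw [map_subtype_center] at hZ
  have hDZ : D ≤ centralizer Z := le_centralizer_iff.mp (hZ.le.trans inf_le_right)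
  exact ⟨(hU i).1, (hU i).2.1.trans hDZ, hmax i, hnab i⟩

/-- Lemma 2.13(1): for a Robinson complex `(D, Z; U 1, …, U k)` of `G`, each derived
subgroup `(U i)'` satisfies `(U i)' ⊓ Z = Φ((U i)') = Z((U i)')`, the quotient of
`(U i)'` by this subgroup is simple non-abelian, and `(U i)'` is quasi-simple. -/
theorem robinson_derived_quasisimple (G : Type*) [Group G] [Finite G]
    (D Z : Subgroup G) (k : ℕ) (U : Fin k → Subgroup G)
    (h : IsRobinsonComplex G D Z k U) (i : Fin k) :
    (⁅U i, U i⁆ : Subgroup G) ⊓ Z =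
      (Subgroup.center ↥(⁅U i, U i⁆ : Subgroup G)).map (⁅U i, U i⁆ : Subgroup G).subtype ∧
    (⁅U i, U i⁆ : Subgroup G) ⊓ Z =
      (frattini ↥(⁅U i, U i⁆ : Subgroup G)).map (⁅U i, U i⁆ : Subgroup G).subtype ∧
    IsSimpleGroup (↥(⁅U i, U i⁆ : Subgroup G) ⧸ Subgroup.center ↥(⁅U i, U i⁆ : Subgroup G)) ∧
    (∃ x y : ↥(⁅U i, U i⁆ : Subgroup G) ⧸ Subgroup.center ↥(⁅U i, U i⁆ : Subgroup G),
      x * y ≠ y * x) ∧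
    ⁅(⁅U i, U i⁆ : Subgroup G), (⁅U i, U i⁆ : Subgroup G)⁆ = ⁅U i, U i⁆ := by
  have hS := h.isCentralNonabelianSimpleSection i
  exact ⟨hS.inf_eq_map_center, hS.inf_eq_map_frattini, hS.isSimpleGroup_quotient_center,
    hS.exists_mul_ne_mul_quotient_center, hS.commutator_commutator_eq⟩
end
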